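/- arXiv:2404.00581 — 5 statements merged into one kernel-verified Lean document; each statement's English description precedes it below -/
import Mathlib

section
/- Functorial Newman's lemma: if a functorial rewriting system is terminating (SN) and locally confluent-commuting (WCR⟲), then it is confluent-commuting (CR⟲). -/
open CategoryTheory

universe v u

/-! ## Functorial rewriting systems -/

/-- Evaluation of a word of (indices of) endofunctors as an endofunctor;
the head of the list is applied first (innermost). -/
def evalWord {C : Type u} [Category.{v} C] {I : Type} (F : I → C ⥤ C) :
    List I → C ⥤ C
  | [] => 𝟭 C
  | i :: w => F i ⋙ evalWord F w

theorem evalWord_append {C : Type u} [Category.{v} C] {I : Type} (F : I → C ⥤ C)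
    (u w : List I) :
    evalWord F (u ++ w) = evalWord F u ⋙ evalWord F w := by
  induction u with
  | nil => rfl
  | cons i u ih =>
      show F i ⋙ evalWord F (u ++ w) = (F i ⋙ evalWord F u) ⋙ evalWord F w
      rw [ih, Functor.assoc]

/-- A functorial rewriting system: a finite set of endofunctors on `C`
together with a finite set of natural transformations between composites
of these functors, used as rewrite rules. -/
structure FRS (C : Type u) [Category.{v} C] where
  I : Type
  ifin : Finite I
  F : I → C ⥤ C
  J : Type
  jfin : Finite J
  lhs : J → List I
  rhs : J → List I
  rule : ∀ j, evalWord F (lhs j) ⟶ evalWord F (rhs j)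

namespace FRS

variable {C : Type u} [Category.{v} C]

/-- A rewrite step: rewriting `A ++ L ++ B` to `A ++ R ++ B` by a rule `L → R`. -/
inductive Step (S : FRS C) : List S.I → List S.I → Type
  | mk (A B : List S.I) (j : S.J) :
      Step S (A ++ S.lhs j ++ B) (A ++ S.rhs j ++ B)

/-- The natural transformation realised by a rewrite step, obtained by
whiskering the rule with the contexts. -/
def Step.nt {S : FRS C} : ∀ {u w : List S.I},
    S.Step u w → (evalWord S.F u ⟶ evalWord S.F w)
  | _, _, .mk A B j =>
    eqToHom (by rw [evalWord_append, evalWord_append, Functor.assoc]) ≫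
      Functor.whiskerLeft (evalWord S.F A) (Functor.whiskerRight (S.rule j) (evalWord S.F B)) ≫
      eqToHom (by rw [evalWord_append, evalWord_append, Functor.assoc])

/-- Rewrite sequences, composing the natural transformations of their steps. -/
inductive Seq (S : FRS C) : List S.I → List S.I → Type
  | nil (u : List S.I) : Seq S u u
  | cons {u v w : List S.I} : S.Step u v → Seq S v w → Seq S u w

/-- The natural transformation realised by a rewrite sequence. -/
def Seq.nt {S : FRS C} : ∀ {u w : List S.I},
    S.Seq u w → (evalWord S.F u ⟶ evalWord S.F w)
  | _, _, .nil u => 𝟙 _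
  | _, _, .cons s rest => s.nt ≫ rest.nt

/-- Termination (SN): there is no infinite rewrite sequence. -/
def SN (S : FRS C) : Prop :=
  ¬ ∃ f : ℕ → List S.I, ∀ n, Nonempty (S.Step (f n) (f (n + 1)))

/-- Local confluence-commutation (WCR⟲): every one-step peak can be completed
to a commuting square of natural transformations. -/
def WCRc (S : FRS C) : Prop :=
  ∀ {u v w : List S.I} (s : S.Step u v) (t : S.Step u w),
    ∃ (z : List S.I) (γ : S.Seq v z) (δ : S.Seq w z),
      s.nt ≫ γ.nt = t.nt ≫ δ.nt

/-- Confluence-commutation (CR⟲): every peak of rewrite sequences can be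
completed to a commuting square of natural transformations. -/
def CRc (S : FRS C) : Prop :=
  ∀ {u v w : List S.I} (α : S.Seq u v) (β : S.Seq u w),
    ∃ (z : List S.I) (γ : S.Seq v z) (δ : S.Seq w z),
      α.nt ≫ γ.nt = β.nt ≫ δ.nt

end FRS

namespace FRS

variable {C : Type u} [Category.{v} C]

/-- Concatenation of rewrite sequences. -/
def Seq.trans {S : FRS C} : ∀ {u v w : List S.I}, S.Seq u v → S.Seq v w → S.Seq u w
  | _, _, _, .nil _, b => b
  | _, _, _, .cons s a, b => .cons s (a.trans b)

theorem Seq.trans_nt {S : FRS C} : ∀ {u v w : List S.I} (a : S.Seq u v) (b : S.Seq v w),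
    (a.trans b).nt = a.nt ≫ b.nt
  | _, _, _, .nil _, b => by simp [Seq.trans, Seq.nt]
  | _, _, _, .cons s a, b => by
      simp [Seq.trans, Seq.nt, Seq.trans_nt a b]

end FRS

/-! ## Statement 11: functorial Newman's lemma -/

/-- Functorial Newman's lemma: a terminating (SN) and locally
confluent-commuting (WCR⟲) functorial rewriting system is
confluent-commuting (CR⟲). -/
theorem functorial_newman {C : Type u} [Category.{v} C] (S : FRS C)
    (hSN : S.SN) (hWCR : S.WCRc) : S.CRc := by
  set r : List S.I → List S.I → Prop := fun a b => Nonempty (S.Step b a) with hr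
  have hwf : WellFounded r := by
    constructor
    intro x
    by_contra hx
    have step : ∀ y : {a : List S.I // ¬Acc r a}, ∃ z : {a : List S.I // ¬Acc r a}, r z.1 y.1 := by
      rintro ⟨y, hy⟩
      have h' : ¬ ∀ b, r b y → Acc r b := fun h => hy (Acc.intro y h)
      push_neg at h'
      obtain ⟨b, hb1, hb2⟩ := h'
      exact ⟨⟨b, hb2⟩, hb1⟩
    choose f hf using step
    refine hSN ⟨fun n => (f^[n] ⟨x, hx⟩).1, fun n => ?_⟩
    have hg : f^[n+1] ⟨x, hx⟩ = f (f^[n] ⟨x, hx⟩) := Function.iterate_succ_apply' f n _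
    have := hf (f^[n] ⟨x, hx⟩)
    rw [← hg] at this
    exact this
  have main : ∀ u : List S.I, ∀ {v w : List S.I} (α : S.Seq u v) (β : S.Seq u w),
      ∃ (z : List S.I) (γ : S.Seq v z) (δ : S.Seq w z),
        α.nt ≫ γ.nt = β.nt ≫ δ.nt := by
    intro u
    induction u using hwf.induction with
    | _ u IH =>
      intro v w α β
      cases α with
      | nil => exact ⟨w, β, .nil w, by simp [FRS.Seq.nt]⟩
      | cons s α' =>
        cases β with
        | nil => exact ⟨v, .nil v, .cons s α', by simp [FRS.Seq.nt]⟩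
        | cons t β' =>
          obtain ⟨z0, γ0, δ0, h1⟩ := hWCR s t
          obtain ⟨z1, γ1, δ1, h2⟩ := IH _ ⟨s⟩ α' γ0
          obtain ⟨z2, ε, ζ, h3⟩ := IH _ ⟨t⟩ (δ0.trans δ1) β'
          have h3' : δ0.nt ≫ δ1.nt ≫ ε.nt = β'.nt ≫ ζ.nt := by
            simpa [FRS.Seq.trans_nt] using h3
          refine ⟨z2, γ1.trans ε, ζ, ?_⟩
          simp only [FRS.Seq.nt, FRS.Seq.trans_nt, Category.assoc]
          calc s.nt ≫ α'.nt ≫ γ1.nt ≫ ε.nt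
              = s.nt ≫ (α'.nt ≫ γ1.nt) ≫ ε.nt := by simp
            _ = s.nt ≫ (γ0.nt ≫ δ1.nt) ≫ ε.nt := by rw [h2]
            _ = (s.nt ≫ γ0.nt) ≫ δ1.nt ≫ ε.nt := by simp
            _ = (t.nt ≫ δ0.nt) ≫ δ1.nt ≫ ε.nt := by rw [h1]
            _ = t.nt ≫ δ0.nt ≫ δ1.nt ≫ ε.nt := by simp
            _ = t.nt ≫ β'.nt ≫ ζ.nt := by rw [h3']
  intro u v w α β
  exact main u α β
end

section
/- Functorial critical pair lemma: a functorial rewriting system is locally confluent-commuting (WCR⟲) if and only if all its critical pairs converge with a commuting diagram, i.e. for every critical pair H₀ ←α W →β H₁ arising from an overlap of two rules there exist rewrite sequences γ : H₀ ↠ H₂ and δ : H₁ ↠ H₂ with γ ∘ α = δ ∘ β as natural transformations. -/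
open CategoryTheory

universe v u

/-! ## Statement 12: functorial critical pair lemma -/

/-- Convergence, with a commuting diagram, of all critical pairs: whenever two
rule applications overlap nontrivially (their redex occurrences share a letter,
the word is exactly covered by the two redexes, and the two occurrences are not
identical), the resulting peak can be completed by rewrite sequences to a common
word, with the two composite natural transformations equal. -/
def FRS.CriticalPairsConverge {C : Type u} [Category.{v} C] (S : FRS C) : Prop :=
  ∀ (A₁ B₁ : List S.I) (j₁ : S.J) (A₂ B₂ : List S.I) (j₂ : S.J)
    (h : A₁ ++ S.lhs j₁ ++ B₁ = A₂ ++ S.lhs j₂ ++ B₂),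
    -- the two redex occurrences overlap on at least one letter
    A₁.length < A₂.length + (S.lhs j₂).length →
    A₂.length < A₁.length + (S.lhs j₁).length →
    -- minimality: no superfluous context around the overlap
    (A₁ = [] ∨ A₂ = []) → (B₁ = [] ∨ B₂ = []) →
    -- the overlap is not the trivial self-overlap
    ¬(A₁ = A₂ ∧ j₁ = j₂) →
    ∃ (z : List S.I) (γ : S.Seq (A₁ ++ S.rhs j₁ ++ B₁) z)
      (δ : S.Seq (A₂ ++ S.rhs j₂ ++ B₂) z),
      (FRS.Step.mk A₁ B₁ j₁).nt ≫ γ.nt =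
        CategoryTheory.eqToHom (congrArg (evalWord S.F) h) ≫
          (FRS.Step.mk A₂ B₂ j₂).nt ≫ δ.nt

open Functor

section Helpers

variable {C : Type u} [Category.{v} C]

lemma whiskerLeft_eqToHom' (F : C ⥤ C) {G H : C ⥤ C} (h : G = H) :
    whiskerLeft F (eqToHom h) = eqToHom (by rw [h]) := by subst h; simp

lemma whiskerRight_eqToHom' {G H : C ⥤ C} (h : G = H) (F : C ⥤ C) :
    whiskerRight (eqToHom h) F = eqToHom (by rw [h]) := by subst h; simp

lemma whiskerLeft_congrF {F F' : C ⥤ C} (h : F = F') {G H : C ⥤ C} (α : G ⟶ H) :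
    whiskerLeft F α = eqToHom (by rw [h]) ≫ whiskerLeft F' α ≫ eqToHom (by rw [h]) := by
  subst h; simp

lemma whiskerRight_congrF {F F' : C ⥤ C} (h : F = F') {G H : C ⥤ C} (α : G ⟶ H) :
    whiskerRight α F = eqToHom (by rw [h]) ≫ whiskerRight α F' ≫ eqToHom (by rw [h]) := by
  subst h; simp

lemma whiskerLeft_assoc (F G : C ⥤ C) {H H' : C ⥤ C} (α : H ⟶ H') :
    whiskerLeft (F ⋙ G) α = whiskerLeft F (whiskerLeft G α) := rfl

lemma whiskerRight_assoc (F G : C ⥤ C) {H H' : C ⥤ C} (α : H ⟶ H') :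
    whiskerRight α (F ⋙ G) = whiskerRight (whiskerRight α F) G := rfl

lemma whiskerRight_left_comm (F : C ⥤ C) {G H : C ⥤ C} (α : G ⟶ H) (K : C ⥤ C) :
    whiskerRight (whiskerLeft F α) K = whiskerLeft F (whiskerRight α K) := rfl

lemma whisker_exchange₂ {P P' Q Q' : C ⥤ C} (α : P ⟶ P') (β : Q ⟶ Q') :
    whiskerRight α Q ≫ whiskerLeft P' β = whiskerLeft P β ≫ whiskerRight α Q' := by
  ext X
  simp only [NatTrans.comp_app, whiskerLeft_app, whiskerRight_app]
  exact β.naturality (α.app X)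

lemma disjoint_exchange (A L₁ R₁ M L₂ R₂ B : C ⥤ C) (α : L₁ ⟶ R₁) (β : L₂ ⟶ R₂) :
    whiskerLeft A (whiskerRight α (M ⋙ L₂ ⋙ B)) ≫
        whiskerLeft A (whiskerLeft R₁ (whiskerLeft M (whiskerRight β B))) =
      whiskerLeft A (whiskerLeft L₁ (whiskerLeft M (whiskerRight β B))) ≫
        whiskerLeft A (whiskerRight α (M ⋙ R₂ ⋙ B)) := by
  rw [← whiskerLeft_comp, ← whiskerLeft_comp, whisker_exchange₂]

end Helpers

namespace FRS

variable {C : Type u} [Category.{v} C] {S : FRS C}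

/-- Cast a step along equalities of its endpoint words. -/
def Step.cast {u w u' w' : List S.I} (hu : u = u') (hw : w = w') (s : S.Step u w) :
    S.Step u' w' := hu ▸ hw ▸ s

lemma Step.cast_nt {u w u' w' : List S.I} (hu : u = u') (hw : w = w') (s : S.Step u w) :
    (s.cast hu hw).nt =
      eqToHom (congrArg (evalWord S.F) hu.symm) ≫ s.nt ≫
        eqToHom (congrArg (evalWord S.F) hw) := by
  subst hu hw; simp [Step.cast]

/-- Cast a rewrite sequence along equalities of its endpoint words. -/
def Seq.cast {u w u' w' : List S.I} (hu : u = u') (hw : w = w') (s : S.Seq u w) :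
    S.Seq u' w' := hu ▸ hw ▸ s

lemma Seq.cast_nt {u w u' w' : List S.I} (hu : u = u') (hw : w = w') (s : S.Seq u w) :
    (s.cast hu hw).nt =
      eqToHom (congrArg (evalWord S.F) hu.symm) ≫ s.nt ≫
        eqToHom (congrArg (evalWord S.F) hw) := by
  subst hu hw; simp [Seq.cast]

/-- A single-step sequence. -/
def Seq.single {u w : List S.I} (s : S.Step u w) : S.Seq u w := .cons s (.nil w)

@[simp] lemma Seq.single_nt {u w : List S.I} (s : S.Step u w) :
    (Seq.single s).nt = s.nt := by
  simp [Seq.single, Seq.nt]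

/-- Composition of rewrite sequences. -/
def Seq.comp : ∀ {u v w : List S.I}, S.Seq u v → S.Seq v w → S.Seq u w
  | _, _, _, .nil _, τ => τ
  | _, _, _, .cons s σ, τ => .cons s (σ.comp τ)

@[simp] lemma Seq.comp_nt : ∀ {u v w : List S.I} (σ : S.Seq u v) (τ : S.Seq v w),
    (σ.comp τ).nt = σ.nt ≫ τ.nt
  | _, _, _, .nil _, τ => by simp [Seq.comp, Seq.nt]
  | _, _, _, .cons s σ, τ => by
      simp [Seq.comp, Seq.nt, Seq.comp_nt σ τ]

/-- Whiskering a step by contexts `A` and `B`. -/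
def Step.whisker (A B : List S.I) {u w : List S.I} (s : S.Step u w) :
    S.Step (A ++ u ++ B) (A ++ w ++ B) :=
  match s with
  | .mk A' B' j =>
      (Step.mk (A ++ A') (B' ++ B) j).cast (by simp) (by simp)

lemma Step.whisker_nt (A B : List S.I) {u w : List S.I} (s : S.Step u w) :
    (s.whisker A B).nt =
      eqToHom (by rw [evalWord_append, evalWord_append, Functor.assoc]) ≫
        whiskerLeft (evalWord S.F A) (whiskerRight s.nt (evalWord S.F B)) ≫
        eqToHom (by rw [evalWord_append, evalWord_append, Functor.assoc]) := by
  obtain ⟨A', B', j⟩ := s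
  simp only [Step.whisker]
  rw [Step.cast_nt]
  simp only [Step.nt]
  rw [whiskerLeft_congrF (evalWord_append S.F A A'),
    whiskerRight_congrF (evalWord_append S.F B' B)]
  simp only [whiskerLeft_comp, whiskerRight_comp, whiskerLeft_eqToHom',
    whiskerRight_eqToHom', Category.assoc, eqToHom_trans, eqToHom_trans_assoc]
  rfl

/-- Whiskering a rewrite sequence by contexts `A` and `B`. -/
def Seq.whisker (A B : List S.I) : ∀ {u w : List S.I}, S.Seq u w →
    S.Seq (A ++ u ++ B) (A ++ w ++ B)
  | _, _, .nil u => .nil _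
  | _, _, .cons s σ => .cons (s.whisker A B) (σ.whisker A B)

lemma Seq.whisker_nt' (A B : List S.I) : ∀ {u w : List S.I} (σ : S.Seq u w),
    (σ.whisker A B).nt =
      eqToHom (by rw [evalWord_append, evalWord_append, Functor.assoc]) ≫
        whiskerLeft (evalWord S.F A) (whiskerRight σ.nt (evalWord S.F B)) ≫
        eqToHom (by rw [evalWord_append, evalWord_append, Functor.assoc])
  | _, _, .nil u => by
      simp [Seq.whisker, Seq.nt]
  | _, _, .cons s σ => by
      simp only [Seq.whisker, Seq.nt, Seq.whisker_nt' A B σ, Step.whisker_nt A B s,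
        whiskerRight_comp, whiskerLeft_comp, Category.assoc, eqToHom_trans,
        eqToHom_trans_assoc, eqToHom_refl, Category.comp_id, Category.id_comp]

/-- Forward direction of the critical pair lemma. -/
lemma wcr_to_cpc (hw : S.WCRc) : S.CriticalPairsConverge := by
  intro A₁ B₁ j₁ A₂ B₂ j₂ h _ _ _ _ _
  obtain ⟨z, γ, δ, e⟩ := hw (Step.mk A₁ B₁ j₁) ((Step.mk A₂ B₂ j₂).cast h.symm rfl)
  refine ⟨z, γ, δ, ?_⟩
  rw [e, Step.cast_nt]
  simp

/-- The square for a pair of disjoint redexes. -/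
lemma disjoint_square (A₁ B₁ : List S.I) (j₁ : S.J) (A₂ B₂ : List S.I) (j₂ : S.J)
    (M : List S.I) (hA : A₂ = A₁ ++ S.lhs j₁ ++ M) (hB : B₁ = M ++ S.lhs j₂ ++ B₂)
    (h : A₁ ++ S.lhs j₁ ++ B₁ = A₂ ++ S.lhs j₂ ++ B₂) :
    ∃ (z : List S.I) (γ : S.Seq (A₁ ++ S.rhs j₁ ++ B₁) z)
      (δ : S.Seq (A₂ ++ S.rhs j₂ ++ B₂) z),
      (Step.mk A₁ B₁ j₁).nt ≫ γ.nt =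
        eqToHom (congrArg (evalWord S.F) h) ≫ (Step.mk A₂ B₂ j₂).nt ≫ δ.nt := by
  subst hA hB
  refine ⟨A₁ ++ S.rhs j₁ ++ (M ++ S.rhs j₂ ++ B₂),
    Seq.single ((Step.mk (A₁ ++ S.rhs j₁ ++ M) B₂ j₂).cast (by simp) (by simp)),
    Seq.single ((Step.mk A₁ (M ++ S.rhs j₂ ++ B₂) j₁).cast (by simp) rfl), ?_⟩
  simp only [Seq.single_nt]
  rw [Step.cast_nt, Step.cast_nt]
  simp only [Step.nt]
  rw [whiskerRight_congrF (show evalWord S.F (M ++ S.lhs j₂ ++ B₂) =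
        evalWord S.F M ⋙ evalWord S.F (S.lhs j₂) ⋙ evalWord S.F B₂ by
        rw [evalWord_append, evalWord_append, Functor.assoc]),
    whiskerRight_congrF (show evalWord S.F (M ++ S.rhs j₂ ++ B₂) =
        evalWord S.F M ⋙ evalWord S.F (S.rhs j₂) ⋙ evalWord S.F B₂ by
        rw [evalWord_append, evalWord_append, Functor.assoc]),
    whiskerLeft_congrF (show evalWord S.F (A₁ ++ S.rhs j₁ ++ M) =
        evalWord S.F A₁ ⋙ evalWord S.F (S.rhs j₁) ⋙ evalWord S.F M by
        rw [evalWord_append, evalWord_append, Functor.assoc]),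
    whiskerLeft_congrF (show evalWord S.F (A₁ ++ S.lhs j₁ ++ M) =
        evalWord S.F A₁ ⋙ evalWord S.F (S.lhs j₁) ⋙ evalWord S.F M by
        rw [evalWord_append, evalWord_append, Functor.assoc])]
  simp only [whiskerLeft_comp, whiskerRight_comp, whiskerLeft_assoc,
    whiskerLeft_eqToHom', whiskerRight_eqToHom', Category.assoc, eqToHom_trans,
    eqToHom_trans_assoc, eqToHom_refl, Category.comp_id, Category.id_comp]
  rw [reassoc_of% disjoint_exchange (evalWord S.F A₁) (evalWord S.F (S.lhs j₁))
    (evalWord S.F (S.rhs j₁)) (evalWord S.F M) (evalWord S.F (S.lhs j₂))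
    (evalWord S.F (S.rhs j₂)) (evalWord S.F B₂) (S.rule j₁) (S.rule j₂)]

lemma mk_nt_congr {A A' B B' : List S.I} (hA : A = A') (hB : B = B') (j : S.J) :
    (Step.mk A B j).nt =
      eqToHom (by rw [hA, hB]) ≫ (Step.mk A' B' j).nt ≫ eqToHom (by rw [hA, hB]) := by
  subst hA hB; simp

/-- Splitting the contexts of a step into outer and inner parts. -/
lemma nt_split (A₀ A B B₀ : List S.I) (j : S.J) :
    (Step.mk (A₀ ++ A) (B ++ B₀) j).nt =
      eqToHom (show evalWord S.F ((A₀ ++ A) ++ S.lhs j ++ (B ++ B₀)) =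
          evalWord S.F A₀ ⋙ evalWord S.F (A ++ S.lhs j ++ B) ⋙ evalWord S.F B₀ by
          simp only [evalWord_append, List.append_assoc, Functor.assoc]) ≫
        whiskerLeft (evalWord S.F A₀)
          (whiskerRight ((Step.mk A B j).nt) (evalWord S.F B₀)) ≫
        eqToHom (show evalWord S.F A₀ ⋙ evalWord S.F (A ++ S.rhs j ++ B) ⋙ evalWord S.F B₀ =
          evalWord S.F ((A₀ ++ A) ++ S.rhs j ++ (B ++ B₀)) by
          simp only [evalWord_append, List.append_assoc, Functor.assoc]) := by
  simp only [Step.nt]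
  rw [whiskerLeft_congrF (show evalWord S.F (A₀ ++ A) =
        evalWord S.F A₀ ⋙ evalWord S.F A from evalWord_append S.F A₀ A),
    whiskerRight_congrF (show evalWord S.F (B ++ B₀) =
        evalWord S.F B ⋙ evalWord S.F B₀ from evalWord_append S.F B B₀)]
  simp only [whiskerLeft_comp, whiskerRight_comp, whiskerLeft_assoc, whiskerRight_assoc,
    whiskerRight_left_comm, whiskerLeft_eqToHom', whiskerRight_eqToHom',
    Category.assoc, eqToHom_trans, eqToHom_trans_assoc, eqToHom_refl,
    Category.comp_id, Category.id_comp]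

/-- Splitting off an inner step whose left context is empty. -/
lemma nt_split₁ (A B B₀ : List S.I) (j : S.J) :
    (Step.mk A (B ++ B₀) j).nt =
      eqToHom (show evalWord S.F (A ++ S.lhs j ++ (B ++ B₀)) =
          evalWord S.F A ⋙ evalWord S.F ([] ++ S.lhs j ++ B) ⋙ evalWord S.F B₀ by
          simp only [evalWord_append, List.append_assoc, List.nil_append, Functor.assoc]) ≫
        whiskerLeft (evalWord S.F A)
          (whiskerRight ((Step.mk ([] : List S.I) B j).nt) (evalWord S.F B₀)) ≫
        eqToHom (show evalWord S.F A ⋙ evalWord S.F ([] ++ S.rhs j ++ B) ⋙ evalWord S.F B₀ =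
          evalWord S.F (A ++ S.rhs j ++ (B ++ B₀)) by
          simp only [evalWord_append, List.append_assoc, List.nil_append, Functor.assoc]) := by
  rw [mk_nt_congr (show A = A ++ ([] : List S.I) by simp) (rfl : B ++ B₀ = B ++ B₀) j,
    nt_split A [] B B₀ j]
  simp only [Category.assoc, eqToHom_trans, eqToHom_trans_assoc]

/-- The square for a pair of overlapping redexes, lifted from a critical pair. -/
lemma overlap_square (hc : S.CriticalPairsConverge)
    (A₁ A' B₁'' B₂'' B₀ : List S.I) (j₁ j₂ : S.J)
    (hcore : [] ++ S.lhs j₁ ++ B₁'' = A' ++ S.lhs j₂ ++ B₂'')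
    (l₁ : (List.nil (α := S.I)).length < A'.length + (S.lhs j₂).length)
    (l₂ : A'.length < ([] : List S.I).length + (S.lhs j₁).length)
    (hBmin : B₁'' = [] ∨ B₂'' = [])
    (hnt : ¬(([] : List S.I) = A' ∧ j₁ = j₂))
    (h : A₁ ++ S.lhs j₁ ++ (B₁'' ++ B₀) = (A₁ ++ A') ++ S.lhs j₂ ++ (B₂'' ++ B₀)) :
    ∃ (z : List S.I) (γ : S.Seq (A₁ ++ S.rhs j₁ ++ (B₁'' ++ B₀)) z)
      (δ : S.Seq ((A₁ ++ A') ++ S.rhs j₂ ++ (B₂'' ++ B₀)) z),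
      (Step.mk A₁ (B₁'' ++ B₀) j₁).nt ≫ γ.nt =
        eqToHom (congrArg (evalWord S.F) h) ≫
          (Step.mk (A₁ ++ A') (B₂'' ++ B₀) j₂).nt ≫ δ.nt := by
  obtain ⟨z₀, γ₀, δ₀, e₀⟩ := hc [] B₁'' j₁ A' B₂'' j₂ hcore l₁ l₂ (Or.inl rfl) hBmin hnt
  refine ⟨A₁ ++ z₀ ++ B₀,
    (γ₀.whisker A₁ B₀).cast (by simp) rfl,
    (δ₀.whisker A₁ B₀).cast (by simp) rfl, ?_⟩
  have e₁ := congrArg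
    (fun η => whiskerLeft (evalWord S.F A₁) (whiskerRight η (evalWord S.F B₀))) e₀
  simp only [whiskerRight_comp, whiskerLeft_comp, whiskerRight_eqToHom',
    whiskerLeft_eqToHom'] at e₁
  rw [nt_split₁ A₁ B₁'' B₀ j₁, nt_split A₁ A' B₂'' B₀ j₂, Seq.cast_nt, Seq.cast_nt,
    Seq.whisker_nt', Seq.whisker_nt']
  simp only [Category.assoc, eqToHom_trans, eqToHom_trans_assoc, eqToHom_refl,
    Category.comp_id, Category.id_comp]
  rw [reassoc_of% e₁]
  simp only [eqToHom_trans_assoc, Category.assoc, eqToHom_trans]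

/-- Completion of a one-step peak, assuming the first redex starts no later
than the second. -/
lemma peak_square_le (hc : S.CriticalPairsConverge)
    (A₁ B₁ : List S.I) (j₁ : S.J) (A₂ B₂ : List S.I) (j₂ : S.J)
    (h : A₁ ++ S.lhs j₁ ++ B₁ = A₂ ++ S.lhs j₂ ++ B₂)
    (hle : A₁.length ≤ A₂.length) :
    ∃ (z : List S.I) (γ : S.Seq (A₁ ++ S.rhs j₁ ++ B₁) z)
      (δ : S.Seq (A₂ ++ S.rhs j₂ ++ B₂) z),
      (Step.mk A₁ B₁ j₁).nt ≫ γ.nt =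
        eqToHom (congrArg (evalWord S.F) h) ≫ (Step.mk A₂ B₂ j₂).nt ≫ δ.nt := by
  by_cases htriv : A₁ = A₂ ∧ j₁ = j₂
  · obtain ⟨hA, hj⟩ := htriv
    subst hA; subst hj
    have hB : B₁ = B₂ := List.append_cancel_left h
    subst hB
    exact ⟨_, .nil _, .nil _, by simp [Seq.nt]⟩
  · -- extract the common prefix
    obtain ⟨A', hA2, hX⟩ :
        ∃ A', A₂ = A₁ ++ A' ∧ S.lhs j₁ ++ B₁ = A' ++ (S.lhs j₂ ++ B₂) := by
      have h' : A₁ ++ (S.lhs j₁ ++ B₁) = A₂ ++ (S.lhs j₂ ++ B₂) := by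
        simpa [List.append_assoc] using h
      rcases List.append_eq_append_iff.mp h' with ⟨A', h1, h2⟩ | ⟨c', h1, h2⟩
      · exact ⟨A', h1, h2⟩
      · have hc0 : c' = [] := by
          have hl := congrArg List.length h1
          simp at hl
          exact List.eq_nil_of_length_eq_zero (by omega)
        subst hc0
        simp at h1
        exact ⟨[], by simp [h1], by simp [h2]⟩
    by_cases hd : (S.lhs j₁).length ≤ A'.length
    · -- disjoint redexes, first one entirely left of the second
      obtain ⟨M, hM1, hM2⟩ :
          ∃ M, A' = S.lhs j₁ ++ M ∧ B₁ = M ++ (S.lhs j₂ ++ B₂) := by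
        rcases List.append_eq_append_iff.mp hX with ⟨a', h1, h2⟩ | ⟨c', h1, h2⟩
        · exact ⟨a', h1, h2⟩
        · have hc0 : c' = [] := by
            have hl := congrArg List.length h1
            simp at hl
            exact List.eq_nil_of_length_eq_zero (by omega)
          subst hc0
          simp at h1
          exact ⟨[], by simp [h1], by simp [h2]⟩
      exact disjoint_square A₁ B₁ j₁ A₂ B₂ j₂ M
        (by simp [hA2, hM1, List.append_assoc]) (by simp [hM2, List.append_assoc]) h
    · push_neg at hd
      by_cases hz : A' = [] ∧ S.lhs j₂ = []
      · -- the second redex is empty and sits at the start of the first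
        obtain ⟨hz1, hz2⟩ := hz
        subst hz1
        have hA2' : A₂ = A₁ := by simpa using hA2
        subst hA2'
        have hB2 : B₂ = S.lhs j₁ ++ B₁ := by
          have := hX
          rw [hz2] at this
          simpa using this.symm
        obtain ⟨z, γ', δ', e⟩ := disjoint_square A₂ B₂ j₂ A₂ B₁ j₁ []
          (by simp [hz2]) (by simp [hB2, hz2]) h.symm
        exact ⟨z, δ', γ', by rw [e]; simp⟩
      · -- genuine overlap: split off the common suffix
        have hpos : 0 < A'.length + (S.lhs j₂).length := by
          rcases List.eq_nil_or_concat A' with rfl | _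
          · have : S.lhs j₂ ≠ [] := fun hh => hz ⟨rfl, hh⟩
            have : (S.lhs j₂).length ≠ 0 := fun hh => this (List.eq_nil_of_length_eq_zero hh)
            omega
          · rename_i hcons
            obtain ⟨_, _, rfl⟩ := hcons
            simp
        have hnt' : ¬(([] : List S.I) = A' ∧ j₁ = j₂) := by
          rintro ⟨rfl, rfl⟩
          exact htriv ⟨by simpa using hA2.symm, rfl⟩
        have hX' : S.lhs j₁ ++ B₁ = (A' ++ S.lhs j₂) ++ B₂ := by
          simpa [List.append_assoc] using hX
        rcases List.append_eq_append_iff.mp hX' with ⟨a', h1, h2⟩ | ⟨c', h1, h2⟩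
        · -- the second redex extends beyond the end of the first
          subst h2
          subst hA2
          have hcore : [] ++ S.lhs j₁ ++ a' = A' ++ S.lhs j₂ ++ [] := by
            simp [h1, List.append_assoc]
          exact overlap_square hc A₁ A' a' [] B₂ j₁ j₂ hcore (by simpa using hpos)
            (by simpa using hd) (Or.inr rfl) hnt' h
        · -- the first redex extends beyond the end of the second
          subst h2
          subst hA2
          have hcore : [] ++ S.lhs j₁ ++ [] = A' ++ S.lhs j₂ ++ c' := by
            simp [h1, List.append_assoc]
          exact overlap_square hc A₁ A' [] c' B₁ j₁ j₂ hcore (by simpa using hpos)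
            (by simpa using hd) (Or.inl rfl) hnt' h

/-- Completion of an arbitrary one-step peak. -/
lemma peak_square (hc : S.CriticalPairsConverge)
    (A₁ B₁ : List S.I) (j₁ : S.J) (A₂ B₂ : List S.I) (j₂ : S.J)
    (h : A₁ ++ S.lhs j₁ ++ B₁ = A₂ ++ S.lhs j₂ ++ B₂) :
    ∃ (z : List S.I) (γ : S.Seq (A₁ ++ S.rhs j₁ ++ B₁) z)
      (δ : S.Seq (A₂ ++ S.rhs j₂ ++ B₂) z),
      (Step.mk A₁ B₁ j₁).nt ≫ γ.nt =
        eqToHom (congrArg (evalWord S.F) h) ≫ (Step.mk A₂ B₂ j₂).nt ≫ δ.nt := by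
  rcases le_total A₁.length A₂.length with hle | hle
  · exact peak_square_le hc A₁ B₁ j₁ A₂ B₂ j₂ h hle
  · obtain ⟨z, γ', δ', e⟩ := peak_square_le hc A₂ B₂ j₂ A₁ B₁ j₁ h.symm hle
    exact ⟨z, δ', γ', by rw [e]; simp⟩

/-- Inversion for rewrite steps. -/
lemma Step.inv {u w : List S.I} (t : S.Step u w) :
    ∃ (A B : List S.I) (j : S.J) (hu : u = A ++ S.lhs j ++ B)
      (hw : w = A ++ S.rhs j ++ B),
      t.nt = eqToHom (congrArg (evalWord S.F) hu) ≫ (Step.mk A B j).nt ≫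
        eqToHom (congrArg (evalWord S.F) hw.symm) := by
  cases t with
  | mk A B j => exact ⟨A, B, j, rfl, rfl, by simp⟩

/-- Backward direction of the critical pair lemma. -/
lemma cpc_to_wcr (hc : S.CriticalPairsConverge) : S.WCRc := by
  intro u v w s t
  obtain ⟨A₁, B₁, j₁, hu₁, hv, hnt₁⟩ := s.inv
  obtain ⟨A₂, B₂, j₂, hu₂, hw, hnt₂⟩ := t.inv
  subst hv; subst hw
  obtain ⟨z, γ, δ, e⟩ := peak_square hc A₁ B₁ j₁ A₂ B₂ j₂ (hu₁.symm.trans hu₂)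
  refine ⟨z, γ, δ, ?_⟩
  rw [hnt₁, hnt₂]
  simp only [eqToHom_refl, Category.comp_id, Category.assoc]
  rw [e]
  simp

end FRS
/-- Functorial critical pair lemma: a functorial rewriting system is locally
confluent-commuting (WCR⟲) if and only if all its critical pairs converge with
a commuting diagram. -/
theorem functorial_critical_pair_lemma {C : Type u} [Category.{v} C] (S : FRS C) :
    S.WCRc ↔ S.CriticalPairsConverge := by
  exact ⟨FRS.wcr_to_cpc, FRS.cpc_to_wcr⟩
end

section
/- Let 𝕊, 𝕋 be algebraic theories with free algebra monads S, T, let λ : ST ⇒ TS be a distributive law, and let 𝕌^λ have signature Σ_𝕊 ⊎ Σ_𝕋 and equations E_𝕊 ∪ E_𝕋 ∪ E_λ. Let E' ⊆ E_λ contain, for each f of arity n in Σ_𝕊, each g of arity m in Σ_𝕋 and each i ∈ {1,…,n}, one equation l = r with l = f(x₁,…,x_{i−1}, g(y₁,…,y_m), x_{i+1},…,x_n) and r a representative of λ_𝒱([l]); view (Σ_𝕊 ⊎ Σ_𝕋, E') as a term rewriting system oriented left to right. If this term rewriting system is terminating, then E_𝕊 ∪ E_𝕋 ∪ E' generates the same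 congruence on terms over Σ_𝕊 ⊎ Σ_𝕋 as E_𝕊 ∪ E_𝕋 ∪ E_λ, i.e. the two sets of axioms derive exactly the same equations in equational logic. -/
/-! ## Algebraic signatures, terms and equational logic -/

/-- An algebraic signature: a set of operation symbols with arities. -/
structure Sgn where
  ops : Type
  ar : ops → ℕ

/-- Terms over a signature `σ` with variables in `X`. -/
inductive Trm (σ : Sgn) (X : Type) : Type
  | var : X → Trm σ X
  | op : (f : σ.ops) → (Fin (σ.ar f) → Trm σ X) → Trm σ X

/-- Simultaneous substitution. -/
def Trm.bind {σ : Sgn} {X Y : Type} : Trm σ X → (X → Trm σ Y) → Trm σ Y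
  | .var x, g => g x
  | .op f k, g => .op f fun i => (k i).bind g

/-- Renaming of variables. -/
def Trm.rename {σ : Sgn} {X Y : Type} (f : X → Y) (t : Trm σ X) : Trm σ Y :=
  t.bind fun x => .var (f x)

/-- Equations over `σ`: pairs of terms over the fixed countable set `ℕ` of variables. -/
abbrev Eqn (σ : Sgn) := Trm σ ℕ × Trm σ ℕ

/-- Derivability in equational logic from the set of axioms `E`
(axioms, reflexivity, symmetry, transitivity, congruence, substitution). -/
inductive Deriv {σ : Sgn} (E : Set (Eqn σ)) : {X : Type} → Trm σ X → Trm σ X → Prop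
  | ax {X : Type} {e : Eqn σ} (he : e ∈ E) (g : ℕ → Trm σ X) :
      Deriv E (e.1.bind g) (e.2.bind g)
  | refl {X : Type} (t : Trm σ X) : Deriv E t t
  | symm {X : Type} {s t : Trm σ X} : Deriv E s t → Deriv E t s
  | trans {X : Type} {s t u : Trm σ X} : Deriv E s t → Deriv E t u → Deriv E s u
  | congr {X : Type} (f : σ.ops) {k k' : Fin (σ.ar f) → Trm σ X} :
      (∀ i, Deriv E (k i) (k' i)) → Deriv E (.op f k) (.op f k')
  | subst {X Y : Type} {s t : Trm σ X} (g : X → Trm σ Y) :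
      Deriv E s t → Deriv E (s.bind g) (t.bind g)

/-- An algebraic theory: a signature together with a set of equations. -/
structure Thy where
  sig : Sgn
  eqns : Set (Eqn sig)

/-! ## The free algebra monad -/

/-- Carrier of the free algebra monad: terms modulo derivable equality. -/
def FreeM (σ : Sgn) (E : Set (Eqn σ)) (X : Type) : Type :=
  Quot (fun s t : Trm σ X => Deriv E s t)

/-- Equivalence class of a term. -/
def FreeM.mk {σ : Sgn} {E : Set (Eqn σ)} {X : Type} (t : Trm σ X) : FreeM σ E X :=
  Quot.mk _ t

/-- Functorial action of the free algebra monad. -/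
noncomputable def FreeM.map {σ : Sgn} {E : Set (Eqn σ)} {X Y : Type}
    (f : X → Y) (q : FreeM σ E X) : FreeM σ E Y :=
  FreeM.mk ((Quot.out q).rename f)

/-- Unit of the free algebra monad. -/
def FreeM.unit {σ : Sgn} {E : Set (Eqn σ)} {X : Type} (x : X) : FreeM σ E X :=
  FreeM.mk (.var x)

/-- Multiplication of the free algebra monad (flattening). -/
noncomputable def FreeM.mul {σ : Sgn} {E : Set (Eqn σ)} {X : Type}
    (q : FreeM σ E (FreeM σ E X)) : FreeM σ E X :=
  FreeM.mk ((Quot.out q).bind fun c => Quot.out c)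

/-! ## Disjoint union of signatures and separated terms -/

/-- Disjoint union of two signatures. -/
def Sgn.sum (σ τ : Sgn) : Sgn := ⟨σ.ops ⊕ τ.ops, Sum.elim σ.ar τ.ar⟩

/-- Embedding of `σ`-terms into terms over the sum signature. -/
def Trm.inl {σ τ : Sgn} {X : Type} : Trm σ X → Trm (σ.sum τ) X
  | .var x => .var x
  | .op f k => .op (Sum.inl f) fun i => (k i).inl

/-- Embedding of `τ`-terms into terms over the sum signature. -/
def Trm.inr {σ τ : Sgn} {X : Type} : Trm τ X → Trm (σ.sum τ) X
  | .var x => .var x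
  | .op f k => .op (Sum.inr f) fun i => (k i).inr

/-- Flattening of a separated term `t[s_x/x]` (`τ`-term over `σ`-terms)
into a term over the sum signature. -/
def sepTS {σ τ : Sgn} {X : Type} (t : Trm τ (Trm σ X)) : Trm (σ.sum τ) X :=
  (Trm.inr t).bind fun s => Trm.inl s

/-- Flattening of a mixed term `s[t_x/x]` (`σ`-term over `τ`-terms)
into a term over the sum signature. -/
def sepST {σ τ : Sgn} {X : Type} (s : Trm σ (Trm τ X)) : Trm (σ.sum τ) X :=
  (Trm.inl s).bind fun t => Trm.inr t

/-- The element `[t[[s_x]_𝕊/x]]_𝕋` of `TSX` determined by a separated term. -/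
def clTS (SS TT : Thy) {X : Type} (t : Trm TT.sig (Trm SS.sig X)) :
    FreeM TT.sig TT.eqns (FreeM SS.sig SS.eqns X) :=
  FreeM.mk (t.rename FreeM.mk)

/-- The element `[s[[t_x]_𝕋/x]]_𝕊` of `STX` determined by a mixed term. -/
def clST (SS TT : Thy) {X : Type} (s : Trm SS.sig (Trm TT.sig X)) :
    FreeM SS.sig SS.eqns (FreeM TT.sig TT.eqns X) :=
  FreeM.mk (s.rename FreeM.mk)

/-! ## Composite theories -/

/-- A composite theory of `TT` after `SS`: a theory on the disjoint union
of the signatures, containing both sets of equations, in which every term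
has a separation, and separations are essentially unique. -/
structure Composite (SS TT : Thy) where
  eqns : Set (Eqn (SS.sig.sum TT.sig))
  containsS : ∀ e ∈ SS.eqns, ((Trm.inl e.1 : Trm (SS.sig.sum TT.sig) ℕ), Trm.inl e.2) ∈ eqns
  containsT : ∀ e ∈ TT.eqns, ((Trm.inr e.1 : Trm (SS.sig.sum TT.sig) ℕ), Trm.inr e.2) ∈ eqns
  sepExists : ∀ u : Trm (SS.sig.sum TT.sig) ℕ,
      ∃ t : Trm TT.sig (Trm SS.sig ℕ), Deriv eqns u (sepTS t)
  sepUnique : ∀ t t' : Trm TT.sig (Trm SS.sig ℕ),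
      Deriv eqns (sepTS t) (sepTS t') → clTS SS TT t = clTS SS TT t'

/-! ## Distributive laws between free algebra monads -/

/-- A distributive law `λ : ST ⇒ TS` between the free algebra monads of `SS` and `TT`. -/
structure DistLaw (SS TT : Thy) where
  app : ∀ X : Type, FreeM SS.sig SS.eqns (FreeM TT.sig TT.eqns X) →
      FreeM TT.sig TT.eqns (FreeM SS.sig SS.eqns X)
  natural : ∀ (X Y : Type) (f : X → Y)
      (q : FreeM SS.sig SS.eqns (FreeM TT.sig TT.eqns X)),
      app Y (FreeM.map (FreeM.map f) q) = FreeM.map (FreeM.map f) (app X q)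
  unitS : ∀ (X : Type) (q : FreeM TT.sig TT.eqns X),
      app X (FreeM.unit q) = FreeM.map FreeM.unit q
  unitT : ∀ (X : Type) (q : FreeM SS.sig SS.eqns X),
      app X (FreeM.map FreeM.unit q) = FreeM.unit q
  mulS : ∀ (X : Type)
      (q : FreeM SS.sig SS.eqns (FreeM SS.sig SS.eqns (FreeM TT.sig TT.eqns X))),
      app X (FreeM.mul q) =
        FreeM.map FreeM.mul (app (FreeM SS.sig SS.eqns X) (FreeM.map (app X) q))
  mulT : ∀ (X : Type)
      (q : FreeM SS.sig SS.eqns (FreeM TT.sig TT.eqns (FreeM TT.sig TT.eqns X))),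
      app X (FreeM.map FreeM.mul q) =
        FreeM.mul (FreeM.map (app X) (app (FreeM TT.sig TT.eqns X) q))

/-! ## The theory `𝕌^λ` obtained from a distributive law -/

/-- The set `E_λ` of all equations between mixed terms and separated terms
that are related by the distributive law `λ`. -/
def Elam (SS TT : Thy) (d : DistLaw SS TT) : Set (Eqn (SS.sig.sum TT.sig)) :=
  { e | ∃ (s : Trm SS.sig (Trm TT.sig ℕ)) (t : Trm TT.sig (Trm SS.sig ℕ)),
      e = (sepST s, sepTS t) ∧ d.app ℕ (clST SS TT s) = clTS SS TT t }

/-- The equations of `𝕊`, embedded into the sum signature. -/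
def embedS (SS TT : Thy) : Set (Eqn (SS.sig.sum TT.sig)) :=
  { e | ∃ e₀ ∈ SS.eqns, e = (Trm.inl e₀.1, Trm.inl e₀.2) }

/-- The equations of `𝕋`, embedded into the sum signature. -/
def embedT (SS TT : Thy) : Set (Eqn (SS.sig.sum TT.sig)) :=
  { e | ∃ e₀ ∈ TT.eqns, e = (Trm.inr e₀.1, Trm.inr e₀.2) }

/-- The equations `E_𝕊 ∪ E_𝕋 ∪ E_λ` of the theory `𝕌^λ`. -/
def EUlam (SS TT : Thy) (d : DistLaw SS TT) : Set (Eqn (SS.sig.sum TT.sig)) :=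
  embedS SS TT ∪ embedT SS TT ∪ Elam SS TT d

/-! ## Term rewriting -/

/-- One-step rewriting with the rules `R` (oriented left to right), closed
under substitution and context. -/
inductive Rw {σ : Sgn} (R : Set (Eqn σ)) : Trm σ ℕ → Trm σ ℕ → Prop
  | rule {l r : Trm σ ℕ} (h : (l, r) ∈ R) (g : ℕ → Trm σ ℕ) :
      Rw R (l.bind g) (r.bind g)
  | ctx (f : σ.ops) (k : Fin (σ.ar f) → Trm σ ℕ) (i : Fin (σ.ar f))
      {t t' : Trm σ ℕ} :
      Rw R t t' → Rw R (.op f (Function.update k i t)) (.op f (Function.update k i t'))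

/-- Termination of a term rewriting system: there is no infinite rewrite sequence. -/
def RwTerminating {σ : Sgn} (R : Set (Eqn σ)) : Prop :=
  ¬ ∃ f : ℕ → Trm σ ℕ, ∀ n, Rw R (f n) (f (n + 1))

/-! ## Statement 15: a terminating minimal set of distribution axioms suffices -/

/-- The left-hand side `f(x₁,…,x_{i−1}, g(y₁,…,y_m), x_{i+1},…,x_n)`. -/
def lhsOf (SS TT : Thy) (f : SS.sig.ops) (g : TT.sig.ops) (i : Fin (SS.sig.ar f)) :
    Trm (SS.sig.sum TT.sig) ℕ :=
  .op (Sum.inl f) fun (j : Fin (SS.sig.ar f)) =>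
    if j = i then .op (Sum.inr g) (fun l => .var (SS.sig.ar f + l.val))
    else .var j.val

/-! ### Auxiliary term and derivation lemmas -/

theorem trm_bind_bind {σ : Sgn} {X Y Z : Type} (t : Trm σ X) (g : X → Trm σ Y)
    (h : Y → Trm σ Z) : (t.bind g).bind h = t.bind fun x => (g x).bind h := by
  induction t with
  | var x => rfl
  | op f k ih => exact congrArg _ (funext fun i => ih i)

theorem trm_bind_var {σ : Sgn} {X : Type} (t : Trm σ X) : t.bind Trm.var = t := by
  induction t with
  | var x => rfl
  | op f k ih => exact congrArg _ (funext ih)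

theorem trm_bind_congr_fun {σ : Sgn} {X Y : Type} (t : Trm σ X) {g g' : X → Trm σ Y}
    (h : ∀ x, g x = g' x) : t.bind g = t.bind g' := by
  rw [funext h]

theorem deriv_mono {σ : Sgn} {E E' : Set (Eqn σ)} (hEE : E ⊆ E') {X : Type}
    {s t : Trm σ X} (h : Deriv E s t) : Deriv E' s t := by
  induction h with
  | ax he g => exact .ax (hEE he) g
  | refl t => exact .refl t
  | symm _ ih => exact .symm ih
  | trans _ _ ih1 ih2 => exact .trans ih1 ih2
  | congr f _ ih => exact .congr f ih
  | subst g _ ih => exact .subst g ih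

theorem deriv_of_mem {σ : Sgn} {E : Set (Eqn σ)} {e : Eqn σ} (he : e ∈ E) :
    Deriv E e.1 e.2 := by
  have h := Deriv.ax he Trm.var
  rwa [trm_bind_var, trm_bind_var] at h

theorem deriv_bind_right {σ : Sgn} {E : Set (Eqn σ)} {X Y : Type} (t : Trm σ X)
    {g g' : X → Trm σ Y} (hg : ∀ x, Deriv E (g x) (g' x)) :
    Deriv E (t.bind g) (t.bind g') := by
  induction t with
  | var x => exact hg x
  | op f k ih => exact .congr f ih

theorem deriv_bind_congr {σ : Sgn} {E : Set (Eqn σ)} {X Y : Type} {s t : Trm σ X}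
    (h : Deriv E s t) {g g' : X → Trm σ Y} (hg : ∀ x, Deriv E (g x) (g' x)) :
    Deriv E (s.bind g) (t.bind g') :=
  .trans (.subst g h) (deriv_bind_right t hg)

/-! ### FreeM lemmas -/

theorem freem_mk_eq_iff {σ : Sgn} {E : Set (Eqn σ)} {X : Type} {a b : Trm σ X} :
    (FreeM.mk a : FreeM σ E X) = FreeM.mk b ↔ Deriv E a b := by
  constructor
  · intro h
    have h2 : Relation.EqvGen (fun s t : Trm σ X => Deriv E s t) a b := Quot.eq.mp h
    clear h
    induction h2 with
    | rel _ _ h => exact h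
    | refl => exact .refl _
    | symm _ _ _ ih => exact .symm ih
    | trans _ _ _ _ _ ih1 ih2 => exact .trans ih1 ih2
  · exact Quot.sound

theorem freem_out_mk {σ : Sgn} {E : Set (Eqn σ)} {X : Type} (a : Trm σ X) :
    Deriv E (Quot.out (FreeM.mk a : FreeM σ E X)) a :=
  freem_mk_eq_iff.mp (Quot.out_eq _)

theorem freem_mk_out {σ : Sgn} {E : Set (Eqn σ)} {X : Type} (q : FreeM σ E X) :
    FreeM.mk (Quot.out q) = q := Quot.out_eq q

theorem freem_map_mk {σ : Sgn} {E : Set (Eqn σ)} {X Y : Type} (f : X → Y) (a : Trm σ X) :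
    (FreeM.map f (FreeM.mk a) : FreeM σ E Y) = FreeM.mk (a.rename f) :=
  Quot.sound (Deriv.subst _ (freem_out_mk a))

theorem freem_mul_mk {σ : Sgn} {E : Set (Eqn σ)} {X : Type} (a : Trm σ (FreeM σ E X)) :
    FreeM.mul (FreeM.mk a) = FreeM.mk (a.bind Quot.out) :=
  Quot.sound (Deriv.subst _ (freem_out_mk a))

theorem freem_map_map {σ : Sgn} {E : Set (Eqn σ)} {X Y Z : Type} (f : Y → Z) (g : X → Y)
    (q : FreeM σ E X) : FreeM.map f (FreeM.map g q) = FreeM.map (fun x => f (g x)) q := by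
  induction q using Quot.ind with
  | _ a =>
    show FreeM.map f (FreeM.map g (FreeM.mk a)) = FreeM.map (fun x => f (g x)) (FreeM.mk a)
    rw [freem_map_mk, freem_map_mk, freem_map_mk]
    simp only [Trm.rename, trm_bind_bind]
    rfl

theorem freem_map_id {σ : Sgn} {E : Set (Eqn σ)} {X : Type} (q : FreeM σ E X) :
    FreeM.map (fun x => x) q = q := by
  induction q using Quot.ind with
  | _ a =>
    show FreeM.map (fun x => x) (FreeM.mk a) = FreeM.mk a
    rw [freem_map_mk]
    show FreeM.mk (a.bind Trm.var) = FreeM.mk a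
    rw [trm_bind_var]

theorem freem_map_unit {σ : Sgn} {E : Set (Eqn σ)} {X Y : Type} (f : X → Y) (x : X) :
    FreeM.map f (FreeM.unit x : FreeM σ E X) = FreeM.unit (f x) :=
  freem_map_mk f (.var x)

theorem freem_mul_unit {σ : Sgn} {E : Set (Eqn σ)} {X : Type} (q : FreeM σ E X) :
    FreeM.mul (FreeM.unit q) = q := by
  show FreeM.mul (FreeM.mk (.var q)) = q
  rw [freem_mul_mk]
  exact Quot.out_eq q

theorem freem_mul_map_unit {σ : Sgn} {E : Set (Eqn σ)} {X : Type} (q : FreeM σ E X) :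
    FreeM.mul (FreeM.map FreeM.unit q) = q := by
  induction q using Quot.ind with
  | _ a =>
    show FreeM.mul (FreeM.map FreeM.unit (FreeM.mk a)) = FreeM.mk a
    rw [freem_map_mk, freem_mul_mk]
    simp only [Trm.rename, trm_bind_bind]
    have h1 := deriv_bind_right (E := E) a
      (fun x => freem_out_mk (E := E) (Trm.var x))
    rw [trm_bind_var] at h1
    erw [trm_bind_bind]
    exact Quot.sound h1

theorem freem_mul_map_map {σ : Sgn} {E : Set (Eqn σ)} {X Y : Type} (f : X → Y)
    (q : FreeM σ E (FreeM σ E X)) :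
    FreeM.mul (FreeM.map (FreeM.map f) q) = FreeM.map f (FreeM.mul q) := by
  induction q using Quot.ind with
  | _ a =>
    show FreeM.mul (FreeM.map (FreeM.map f) (FreeM.mk a)) = FreeM.map f (FreeM.mul (FreeM.mk a))
    rw [freem_map_mk, freem_mul_mk, freem_mul_mk, freem_map_mk]
    simp only [Trm.rename, trm_bind_bind]
    erw [trm_bind_bind, trm_bind_bind]
    refine Quot.sound (deriv_bind_right a (fun v => ?_))
    show Deriv E ((Trm.var (FreeM.map f v)).bind Quot.out) ((Quot.out v).bind _)
    show Deriv E (Quot.out (FreeM.map f v)) ((Quot.out v).bind _)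
    induction v using Quot.ind with
    | _ b =>
      refine .trans (freem_out_mk _) ?_
      show Deriv E ((FreeM.mk b).out.rename f) _
      exact Deriv.subst _ (.refl _)

theorem freem_mul_assoc {σ : Sgn} {E : Set (Eqn σ)} {X : Type}
    (q : FreeM σ E (FreeM σ E (FreeM σ E X))) :
    FreeM.mul (FreeM.map FreeM.mul q) = FreeM.mul (FreeM.mul q) := by
  induction q using Quot.ind with
  | _ a =>
    show FreeM.mul (FreeM.map FreeM.mul (FreeM.mk a)) = FreeM.mul (FreeM.mul (FreeM.mk a))
    rw [freem_map_mk, freem_mul_mk, freem_mul_mk, freem_mul_mk]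
    erw [trm_bind_bind]
    erw [trm_bind_bind]
    refine Quot.sound (deriv_bind_right a (fun v => ?_))
    show Deriv E (Quot.out (FreeM.mul v)) ((Quot.out v).bind Quot.out)
    induction v using Quot.ind with
    | _ b =>
      exact .trans (freem_out_mk _) (.refl _)
/-! ### Operation application lemmas -/

theorem fS_map {σ : Sgn} {E : Set (Eqn σ)} {W W' : Type} (f : σ.ops) (w : W → W')
    (k : Fin (σ.ar f) → W) :
    FreeM.map w (FreeM.mk (.op f fun i => .var (k i)) : FreeM σ E W) =
      FreeM.mk (.op f fun i => .var (w (k i))) := by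
  rw [freem_map_mk]
  simp only [Trm.rename, Trm.bind]

theorem fS_mul_unit {σ : Sgn} {E : Set (Eqn σ)} {W : Type} (f : σ.ops)
    (c : Fin (σ.ar f) → W) :
    FreeM.mul (FreeM.mk (.op f fun i => .var (FreeM.unit (c i) : FreeM σ E W))) =
      FreeM.mk (.op f fun i => .var (c i)) := by
  rw [freem_mul_mk]
  exact Quot.sound (Deriv.congr f fun i => freem_out_mk _)

theorem fS_mul_mk {σ : Sgn} {E : Set (Eqn σ)} {W : Type} (f : σ.ops)
    (c : Fin (σ.ar f) → Trm σ W) :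
    FreeM.mul (FreeM.mk (.op f fun i => .var (FreeM.mk (c i) : FreeM σ E W))) =
      FreeM.mk (.op f fun i => c i) := by
  rw [freem_mul_mk]
  exact Quot.sound (Deriv.congr f fun i => freem_out_mk _)

/-! ### The semantics of mixed terms in `TS` -/

section Model

variable {SS TT : Thy}

/-- Interpretation of terms over the sum signature in `TSX`. -/
noncomputable def semM (d : DistLaw SS TT) {X : Type} :
    Trm (SS.sig.sum TT.sig) X → FreeM TT.sig TT.eqns (FreeM SS.sig SS.eqns X)
  | .var x => FreeM.unit (FreeM.unit x)
  | .op (Sum.inl f) k =>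
      FreeM.map FreeM.mul (d.app _ (FreeM.mk (.op f fun i => .var (semM d (k i)))))
  | .op (Sum.inr g) k => FreeM.mul (FreeM.mk (.op g fun i => .var (semM d (k i))))

theorem semM_var (d : DistLaw SS TT) {X : Type} (x : X) :
    semM d (.var x) = FreeM.unit (FreeM.unit x) := rfl

theorem semM_inl (d : DistLaw SS TT) {X : Type} (f : SS.sig.ops)
    (k : Fin (SS.sig.ar f) → Trm (SS.sig.sum TT.sig) X) :
    semM d (.op (Sum.inl f) k) =
      FreeM.map FreeM.mul (d.app _ (FreeM.mk (.op f fun i => .var (semM d (k i))))) := rfl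

theorem semM_inr (d : DistLaw SS TT) {X : Type} (g : TT.sig.ops)
    (k : Fin (TT.sig.ar g) → Trm (SS.sig.sum TT.sig) X) :
    semM d (.op (Sum.inr g) k) =
      FreeM.mul (FreeM.mk (.op g fun i => .var (semM d (k i)))) := rfl

/-- Kleisli extension for the composite monad `TS` along the distributive law. -/
noncomputable def innr (d : DistLaw SS TT) {X Y : Type}
    (ρ : X → FreeM TT.sig TT.eqns (FreeM SS.sig SS.eqns Y))
    (p : FreeM SS.sig SS.eqns X) : FreeM TT.sig TT.eqns (FreeM SS.sig SS.eqns Y) :=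
  FreeM.map FreeM.mul (d.app _ (FreeM.map ρ p))

noncomputable def bindM (d : DistLaw SS TT) {X Y : Type}
    (ρ : X → FreeM TT.sig TT.eqns (FreeM SS.sig SS.eqns Y))
    (q : FreeM TT.sig TT.eqns (FreeM SS.sig SS.eqns X)) :
    FreeM TT.sig TT.eqns (FreeM SS.sig SS.eqns Y) :=
  FreeM.mul (FreeM.map (innr d ρ) q)

theorem bindM_unit (d : DistLaw SS TT) {X Y : Type}
    (ρ : X → FreeM TT.sig TT.eqns (FreeM SS.sig SS.eqns Y)) (x : X) :
    bindM d ρ (FreeM.unit (FreeM.unit x)) = ρ x := by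
  unfold bindM
  rw [freem_map_unit, freem_mul_unit]
  unfold innr
  rw [freem_map_unit, d.unitS, freem_map_map,
    show (fun x => FreeM.mul (FreeM.unit x)) =
      (fun x : FreeM SS.sig SS.eqns Y => x) from funext freem_mul_unit,
    freem_map_id]

theorem bindM_opT (d : DistLaw SS TT) {X Y : Type}
    (ρ : X → FreeM TT.sig TT.eqns (FreeM SS.sig SS.eqns Y))
    (g : TT.sig.ops) (k : Fin (TT.sig.ar g) → FreeM TT.sig TT.eqns (FreeM SS.sig SS.eqns X)) :
    bindM d ρ (FreeM.mul (FreeM.mk (.op g fun i => .var (k i)))) =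
      FreeM.mul (FreeM.mk (.op g fun i => .var (bindM d ρ (k i)))) := by
  unfold bindM
  rw [← freem_mul_map_map, ← freem_mul_assoc, freem_map_map, fS_map]

/-- The key algebra lemma: `innr` commutes with `S`-multiplication. -/
theorem innr_mul (d : DistLaw SS TT) {X Y : Type}
    (ρ : X → FreeM TT.sig TT.eqns (FreeM SS.sig SS.eqns Y))
    (p : FreeM SS.sig SS.eqns (FreeM SS.sig SS.eqns X)) :
    innr d ρ (FreeM.mul p) =
      FreeM.map FreeM.mul (FreeM.map FreeM.mul
        (d.app _ (FreeM.map (fun p' => FreeM.map FreeM.unit (innr d ρ p')) p))) := by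
  have key : ∀ z : FreeM SS.sig SS.eqns (FreeM SS.sig SS.eqns (FreeM SS.sig SS.eqns Y)),
      FreeM.mul (FreeM.mul (FreeM.map (fun w => (FreeM.unit (FreeM.mul w) :
        FreeM SS.sig SS.eqns (FreeM SS.sig SS.eqns Y))) z)) = FreeM.mul (FreeM.mul z) := by
    intro z
    rw [show FreeM.map (fun w => (FreeM.unit (FreeM.mul w) :
          FreeM SS.sig SS.eqns (FreeM SS.sig SS.eqns Y))) z =
        FreeM.map FreeM.unit (FreeM.map FreeM.mul z) from (freem_map_map _ _ z).symm,
      freem_mul_map_unit, freem_mul_assoc]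
  have hj : FreeM.map (fun p' => FreeM.map FreeM.unit (innr d ρ p')) p
      = FreeM.map (FreeM.map (fun z => (FreeM.unit (FreeM.mul z) :
          FreeM SS.sig SS.eqns (FreeM SS.sig SS.eqns Y))))
          (FreeM.map (fun v : FreeM SS.sig SS.eqns X => d.app _ (FreeM.map ρ v)) p) := by
    rw [freem_map_map]
    refine congrArg (fun w => FreeM.map w p) (funext fun p' => ?_)
    unfold innr
    rw [freem_map_map]
  have hL : innr d ρ (FreeM.mul p) = FreeM.map (fun z => FreeM.mul (FreeM.mul z))
      (d.app _ (FreeM.map (fun v : FreeM SS.sig SS.eqns X => d.app _ (FreeM.map ρ v)) p)) := by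
    unfold innr
    rw [show FreeM.map ρ (FreeM.mul p) = FreeM.mul (FreeM.map (FreeM.map ρ) p) from
      (freem_mul_map_map ρ p).symm, d.mulS]
    simp only [freem_map_map]
  rw [hL, hj, d.natural]
  simp only [freem_map_map]
  exact congrArg (fun w => FreeM.map w _) (funext fun z => (key z).symm)

/-- `bindM` is a homomorphism for the `λ`-twisted `S`-operations. -/
theorem bindM_opS (d : DistLaw SS TT) {X Y : Type}
    (ρ : X → FreeM TT.sig TT.eqns (FreeM SS.sig SS.eqns Y))
    (f : SS.sig.ops) (k : Fin (SS.sig.ar f) → FreeM TT.sig TT.eqns (FreeM SS.sig SS.eqns X)) :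
    bindM d ρ (FreeM.map FreeM.mul (d.app _ (FreeM.mk (.op f fun i => .var (k i))))) =
      FreeM.map FreeM.mul (d.app _ (FreeM.mk (.op f fun i => .var (bindM d ρ (k i))))) := by
  -- rewrite the right-hand side
  rw [show (FreeM.mk (.op f fun i => .var (bindM d ρ (k i)))
        : FreeM SS.sig SS.eqns (FreeM TT.sig TT.eqns (FreeM SS.sig SS.eqns Y))) =
      FreeM.mul (FreeM.mk (.op f fun i => .var (FreeM.unit (bindM d ρ (k i))))) from
    (fS_mul_unit f _).symm, d.mulS, fS_map]
  simp only [d.unitS]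
  -- now expand `bindM` on the RHS and pull the multiplications through
  conv_rhs =>
    rw [show (fun i => Trm.var (FreeM.map FreeM.unit (bindM d ρ (k i)))) =
      (fun i => Trm.var (FreeM.mul (FreeM.map
        (fun v => FreeM.map FreeM.unit (innr d ρ v)) (k i)))) from funext fun i => by
        unfold bindM
        rw [show FreeM.map FreeM.unit (FreeM.mul (FreeM.map (innr d ρ) (k i))) =
            FreeM.mul (FreeM.map (FreeM.map FreeM.unit) (FreeM.map (innr d ρ) (k i))) from
          (freem_mul_map_map _ _).symm]
        simp only [freem_map_map]]
    rw [show (FreeM.mk (.op f fun i => Trm.var (FreeM.mul (FreeM.map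
          (fun v => FreeM.map FreeM.unit (innr d ρ v)) (k i))))
          : FreeM SS.sig SS.eqns (FreeM TT.sig TT.eqns (FreeM SS.sig SS.eqns
              (FreeM SS.sig SS.eqns Y)))) =
        FreeM.map FreeM.mul (FreeM.mk (.op f fun i => Trm.var (FreeM.map
          (fun v => FreeM.map FreeM.unit (innr d ρ v)) (k i)))) from (fS_map f _ _).symm,
      d.mulT]
    rw [show (FreeM.mk (.op f fun i => Trm.var (FreeM.map
          (fun v => FreeM.map FreeM.unit (innr d ρ v)) (k i)))
          : FreeM SS.sig SS.eqns (FreeM TT.sig TT.eqns (FreeM TT.sig TT.eqns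
              (FreeM SS.sig SS.eqns (FreeM SS.sig SS.eqns Y))))) =
        FreeM.map (FreeM.map (fun v => FreeM.map FreeM.unit (innr d ρ v)))
          (FreeM.mk (.op f fun i => Trm.var (k i))) from (fS_map f _ _).symm,
      d.natural]
  -- both sides are now operations on `d.app _ (mk (op f (var ∘ k)))`
  unfold bindM
  rw [← freem_mul_map_map, ← freem_mul_map_map]
  simp only [freem_map_map]
  exact congrArg FreeM.mul (congrArg (fun w => FreeM.map w _)
    (funext fun z => (innr_mul d ρ z).trans (freem_map_map _ _ _)))

/-! ### Substitution lemma for the semantics -/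

theorem semM_bind (d : DistLaw SS TT) {X Y : Type} (u : Trm (SS.sig.sum TT.sig) X)
    (g : X → Trm (SS.sig.sum TT.sig) Y) :
    semM d (u.bind g) = bindM d (fun x => semM d (g x)) (semM d u) := by
  induction u with
  | var x => exact (bindM_unit d (fun x => semM d (g x)) x).symm
  | op f k ih =>
    cases f with
    | inl f =>
      refine Eq.trans ?_ ((bindM_opS d (fun x => semM d (g x)) f
        (fun i => semM d (k i))).symm)
      exact congrArg (fun w => FreeM.map FreeM.mul (d.app _ (FreeM.mk (Trm.op f w))))
        (funext fun i => congrArg Trm.var (ih i))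
    | inr g' =>
      refine Eq.trans ?_ ((bindM_opT d (fun x => semM d (g x)) g'
        (fun i => semM d (k i))).symm)
      exact congrArg (fun w => FreeM.mul (FreeM.mk (Trm.op g' w)))
        (funext fun i => congrArg Trm.var (ih i))

/-! ### Values of the semantics on embedded and separated terms -/

theorem semM_inlTrm (d : DistLaw SS TT) {X : Type} (a : Trm SS.sig X) :
    semM d (Trm.inl a : Trm (SS.sig.sum TT.sig) X) = FreeM.unit (FreeM.mk a) := by
  induction a with
  | var x => rfl
  | op f k ih =>
    show FreeM.map FreeM.mul
        (d.app _ (FreeM.mk (.op f fun i => .var (semM d (Trm.inl (k i)))))) = _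
    rw [show (fun i => Trm.var (semM d (Trm.inl (k i)))) =
        (fun i => Trm.var ((FreeM.unit (FreeM.mk (k i))
          : FreeM TT.sig TT.eqns (FreeM SS.sig SS.eqns X)))) from
      funext fun i => congrArg _ (ih i)]
    rw [show (FreeM.mk (.op f fun i => Trm.var ((FreeM.unit (FreeM.mk (k i))
          : FreeM TT.sig TT.eqns (FreeM SS.sig SS.eqns X)))))
        = FreeM.map FreeM.unit (FreeM.mk (.op f fun i => .var (FreeM.mk (k i)))) from
      (fS_map f _ _).symm]
    rw [d.unitT, freem_map_unit, fS_mul_mk]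

theorem semM_inrTrm (d : DistLaw SS TT) {X : Type} (b : Trm TT.sig X) :
    semM d (Trm.inr b : Trm (SS.sig.sum TT.sig) X) =
      FreeM.mk (b.rename (fun x => (FreeM.unit x : FreeM SS.sig SS.eqns X))) := by
  induction b with
  | var x => rfl
  | op g k ih =>
    show FreeM.mul (FreeM.mk (.op g fun i => .var (semM d (Trm.inr (k i))))) = _
    rw [show (fun i => Trm.var (semM d (Trm.inr (k i)))) =
        (fun i => Trm.var (FreeM.mk ((k i).rename
          (fun x => (FreeM.unit x : FreeM SS.sig SS.eqns X))))) from
      funext fun i => congrArg _ (ih i)]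
    rw [fS_mul_mk]
    rfl

theorem semM_sepST (d : DistLaw SS TT) {X : Type} (s : Trm SS.sig (Trm TT.sig X)) :
    semM d (sepST s) = d.app _ (FreeM.mk (s.rename FreeM.mk)) := by
  induction s with
  | var t =>
    show semM d (Trm.inr t) = _
    rw [semM_inrTrm]
    rw [show (FreeM.mk ((Trm.var t).rename FreeM.mk)
        : FreeM SS.sig SS.eqns (FreeM TT.sig TT.eqns X)) = FreeM.unit (FreeM.mk t) from rfl,
      d.unitS, freem_map_mk]
  | op f k ih =>
    show FreeM.map FreeM.mul
        (d.app _ (FreeM.mk (.op f fun i => .var (semM d (sepST (k i)))))) = _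
    rw [show (fun i => Trm.var (semM d (sepST (k i)))) =
        (fun i => Trm.var (d.app _ (FreeM.mk ((k i).rename
          (FreeM.mk : Trm TT.sig X → FreeM TT.sig TT.eqns X))))) from
      funext fun i => congrArg _ (ih i)]
    rw [show (FreeM.mk (.op f fun i => Trm.var (d.app _ (FreeM.mk ((k i).rename
          (FreeM.mk : Trm TT.sig X → FreeM TT.sig TT.eqns X))))))
        = FreeM.map (d.app _) (FreeM.mk (.op f fun i => .var (FreeM.mk ((k i).rename
          (FreeM.mk : Trm TT.sig X → FreeM TT.sig TT.eqns X))))) from (fS_map f _ _).symm]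
    rw [← d.mulS, fS_mul_mk]
    rfl

theorem semM_sepTS (d : DistLaw SS TT) {X : Type} (t : Trm TT.sig (Trm SS.sig X)) :
    semM d (sepTS t) =
      FreeM.mk (t.rename (FreeM.mk : Trm SS.sig X → FreeM SS.sig SS.eqns X)) := by
  induction t with
  | var s =>
    show semM d (Trm.inl s) = _
    rw [semM_inlTrm]
    rfl
  | op g k ih =>
    show FreeM.mul (FreeM.mk (.op g fun i => .var (semM d (sepTS (k i))))) = _
    rw [show (fun i => Trm.var (semM d (sepTS (k i)))) =
        (fun i => Trm.var (FreeM.mk ((k i).rename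
          (FreeM.mk : Trm SS.sig X → FreeM SS.sig SS.eqns X)))) from
      funext fun i => congrArg _ (ih i)]
    rw [fS_mul_mk]
    rfl

/-! ### Soundness of `𝕌^λ` for the semantics -/

theorem semM_sound (d : DistLaw SS TT) {X : Type} {u v : Trm (SS.sig.sum TT.sig) X}
    (h : Deriv (EUlam SS TT d) u v) : semM d u = semM d v := by
  induction h with
  | refl t => rfl
  | symm _ ih => exact ih.symm
  | trans _ _ ih1 ih2 => exact ih1.trans ih2
  | subst g _ ih => rw [semM_bind, semM_bind, ih]
  | congr f hk ih =>
    cases f with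
    | inl f =>
      exact congrArg (fun w => FreeM.map FreeM.mul (d.app _ (FreeM.mk (Trm.op f w))))
        (funext fun i => congrArg Trm.var (ih i))
    | inr g =>
      exact congrArg (fun w => FreeM.mul (FreeM.mk (Trm.op g w)))
        (funext fun i => congrArg Trm.var (ih i))
  | @ax X e he g =>
    rw [semM_bind, semM_bind]
    refine congrArg (bindM d fun x => semM d (g x)) ?_
    rcases he with (hS | hT) | hlam
    · obtain ⟨e₀, he₀, rfl⟩ := hS
      rw [semM_inlTrm, semM_inlTrm]
      exact congrArg FreeM.unit (Quot.sound (deriv_of_mem he₀))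
    · obtain ⟨e₀, he₀, rfl⟩ := hT
      rw [semM_inrTrm, semM_inrTrm]
      exact Quot.sound (Deriv.subst _ (deriv_of_mem he₀))
    · obtain ⟨s, t, rfl, hval⟩ := hlam
      rw [semM_sepST, semM_sepTS]
      exact hval


end Model
/-! ### Embeddings and substitution -/

theorem inl_bind {σ τ : Sgn} {X Y : Type} (u : Trm σ X) (g : X → Trm σ Y) :
    (Trm.inl (u.bind g) : Trm (σ.sum τ) Y) = (Trm.inl u).bind (fun x => Trm.inl (g x)) := by
  induction u with
  | var x => rfl
  | op f k ih => exact congrArg _ (funext ih)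

theorem inr_bind {σ τ : Sgn} {X Y : Type} (u : Trm τ X) (g : X → Trm τ Y) :
    (Trm.inr (u.bind g) : Trm (σ.sum τ) Y) = (Trm.inr u).bind (fun x => Trm.inr (g x)) := by
  induction u with
  | var x => rfl
  | op f k ih => exact congrArg _ (funext ih)

/-- Derivations in `𝕊` transfer to the sum signature along any interpretation
of the variables. -/
theorem deriv_transfer_inl {σ τ : Sgn} {ES : Set (Eqn σ)} {E₀ : Set (Eqn (σ.sum τ))}
    (hES : ∀ e ∈ ES, ((Trm.inl e.1 : Trm (σ.sum τ) ℕ), Trm.inl e.2) ∈ E₀)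
    {X : Type} {s t : Trm σ X} (h : Deriv ES s t) :
    ∀ c : X → Trm (σ.sum τ) ℕ, Deriv E₀ ((Trm.inl s).bind c) ((Trm.inl t).bind c) := by
  induction h with
  | ax he g =>
    intro c
    rw [inl_bind, inl_bind, trm_bind_bind, trm_bind_bind]
    exact Deriv.ax (hES _ he) (fun n => (Trm.inl (g n)).bind c)
  | refl t => exact fun c => .refl _
  | symm _ ih => exact fun c => .symm (ih c)
  | trans _ _ ih1 ih2 => exact fun c => .trans (ih1 c) (ih2 c)
  | @congr X f k k' _ ih =>
    intro c
    show Deriv E₀ (Trm.op (Sum.inl f) fun i => (Trm.inl (k i)).bind c)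
      (Trm.op (Sum.inl f) fun i => (Trm.inl (k' i)).bind c)
    exact Deriv.congr (Sum.inl f) fun i => ih i c
  | subst g _ ih =>
    intro c
    rw [inl_bind, trm_bind_bind, inl_bind, trm_bind_bind]
    exact ih (fun x => (Trm.inl (g x)).bind c)

theorem deriv_transfer_inr {σ τ : Sgn} {ET : Set (Eqn τ)} {E₀ : Set (Eqn (σ.sum τ))}
    (hET : ∀ e ∈ ET, ((Trm.inr e.1 : Trm (σ.sum τ) ℕ), Trm.inr e.2) ∈ E₀)
    {X : Type} {s t : Trm τ X} (h : Deriv ET s t) :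
    ∀ c : X → Trm (σ.sum τ) ℕ, Deriv E₀ ((Trm.inr s).bind c) ((Trm.inr t).bind c) := by
  induction h with
  | ax he g =>
    intro c
    rw [inr_bind, inr_bind, trm_bind_bind, trm_bind_bind]
    exact Deriv.ax (hET _ he) (fun n => (Trm.inr (g n)).bind c)
  | refl t => exact fun c => .refl _
  | symm _ ih => exact fun c => .symm (ih c)
  | trans _ _ ih1 ih2 => exact fun c => .trans (ih1 c) (ih2 c)
  | @congr X f k k' _ ih =>
    intro c
    show Deriv E₀ (Trm.op (Sum.inr f) fun i => (Trm.inr (k i)).bind c)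
      (Trm.op (Sum.inr f) fun i => (Trm.inr (k' i)).bind c)
    exact Deriv.congr (Sum.inr f) fun i => ih i c
  | subst g _ ih =>
    intro c
    rw [inr_bind, trm_bind_bind, inr_bind, trm_bind_bind]
    exact ih (fun x => (Trm.inr (g x)).bind c)

/-! ### Rewriting -/

theorem rw_deriv {σ : Sgn} {R E : Set (Eqn σ)} (hR : R ⊆ E) {u v : Trm σ ℕ}
    (h : Rw R u v) : Deriv E u v := by
  induction h with
  | rule h g => exact .ax (hR h) g
  | ctx f k i _ ih =>
    refine .congr f fun j => ?_
    rcases eq_or_ne j i with rfl | hj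
    · rw [Function.update_self, Function.update_self]; exact ih
    · rw [Function.update_of_ne hj, Function.update_of_ne hj]; exact .refl _

theorem exists_normal_form {σ : Sgn} {R E : Set (Eqn σ)} (hRE : R ⊆ E)
    (hterm : RwTerminating R) (u : Trm σ ℕ) :
    ∃ v, Deriv E u v ∧ ∀ w, ¬ Rw R v w := by
  classical
  by_contra hbad
  push_neg at hbad
  let step : {v : Trm σ ℕ // Deriv E u v} → {v : Trm σ ℕ // Deriv E u v} :=
    fun x => ⟨Classical.choose (hbad x.1 x.2),
      x.2.trans (rw_deriv hRE (Classical.choose_spec (hbad x.1 x.2)))⟩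
  have hstep : ∀ x, Rw R x.1 (step x).1 :=
    fun x => Classical.choose_spec (hbad x.1 x.2)
  refine hterm ⟨fun n => (step^[n] ⟨u, .refl u⟩).1, fun n => ?_⟩
  show Rw R (step^[n] ⟨u, .refl u⟩).1 (step^[n + 1] ⟨u, .refl u⟩).1
  rw [Function.iterate_succ_apply']
  exact hstep _

/-- A normal form of the rewriting system `E'` is a separated term. -/
theorem normal_sep (SS TT : Thy) (E' : Set (Eqn (SS.sig.sum TT.sig)))
    (rfun : ∀ (f : SS.sig.ops), TT.sig.ops → Fin (SS.sig.ar f) →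
        Trm (SS.sig.sum TT.sig) ℕ)
    (hE' : E' = { e | ∃ f g i, e = (lhsOf SS TT f g i, rfun f g i) })
    (u : Trm (SS.sig.sum TT.sig) ℕ) (hn : ∀ v, ¬ Rw E' u v) :
    ∃ t : Trm TT.sig (Trm SS.sig ℕ), u = sepTS t := by
  induction u with
  | var x => exact ⟨.var (.var x), rfl⟩
  | op f k ih =>
    have hsub : ∀ i (v : Trm (SS.sig.sum TT.sig) ℕ), ¬ Rw E' (k i) v := by
      intro i v hv
      have h2 := Rw.ctx f k i hv
      rw [Function.update_eq_self] at h2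
      exact hn _ h2
    have ihs := fun i => ih i (hsub i)
    choose t ht using ihs
    cases f with
    | inr g =>
      refine ⟨.op g t, ?_⟩
      show Trm.op (Sum.inr g) k = Trm.op (Sum.inr g) fun i => sepTS (t i)
      exact congrArg _ (funext ht)
    | inl f =>
      have hvar : ∀ i, ∃ s, t i = .var s := by
        intro i
        cases htt : t i with
        | var s => exact ⟨s, rfl⟩
        | op g m =>
          exfalso
          classical
          set g₀ : ℕ → Trm (SS.sig.sum TT.sig) ℕ := fun n =>
            if h : n < SS.sig.ar f then k ⟨n, h⟩
            else if h2 : n - SS.sig.ar f < TT.sig.ar g then sepTS (m ⟨n - SS.sig.ar f, h2⟩)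
            else .var 0 with hg₀
          have hbind : (lhsOf SS TT f g i).bind g₀ = Trm.op (Sum.inl f) k := by
            have hfun : (fun j : Fin (SS.sig.ar f) =>
                (if j = i then Trm.op (Sum.inr g) (fun l => Trm.var (SS.sig.ar f + l.val))
                 else (Trm.var j.val : Trm (SS.sig.sum TT.sig) ℕ)).bind g₀) =
                fun j => k j := by
              funext j
              by_cases hj : j = i
              · subst hj
                rw [if_pos rfl, ht j, htt]
                show @Trm.op (SS.sig.sum TT.sig) ℕ (Sum.inr g)
                    (fun l => g₀ (SS.sig.ar f + (Fin.val l))) =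
                  @Trm.op (SS.sig.sum TT.sig) ℕ (Sum.inr g) (fun l => sepTS (m l))
                refine congrArg _ (funext fun l => ?_)
                have h1 : ¬ (SS.sig.ar f + l.val < SS.sig.ar f) := by omega
                have h2 : SS.sig.ar f + l.val - SS.sig.ar f < TT.sig.ar g := by
                  have hl : l.val < TT.sig.ar g := l.isLt
                  omega
                simp only [hg₀]
                rw [dif_neg h1, dif_pos h2]
                exact congrArg (fun x => sepTS (m x))
                  (show (⟨SS.sig.ar f + l.val - SS.sig.ar f, h2⟩ : Fin (TT.sig.ar g)) = l from
                    Fin.ext (show SS.sig.ar f + l.val - SS.sig.ar f = l.val by omega))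
              · rw [if_neg hj]
                show g₀ j.val = k j
                simp only [hg₀]
                rw [dif_pos j.isLt]
                exact congrArg k (Fin.ext rfl)
            convert congrArg (Trm.op (σ := SS.sig.sum TT.sig) (Sum.inl f)) hfun
            unfold lhsOf
            simp only [Trm.bind]
            congr
            funext j
            split_ifs <;> rfl
          have hmem : (lhsOf SS TT f g i, rfun f g i) ∈ E' := by
            rw [hE']; exact ⟨f, g, i, rfl⟩
          have := Rw.rule hmem g₀
          rw [hbind] at this
          exact hn _ this
      choose sfn hs using hvar
      refine ⟨.var (.op f sfn), ?_⟩
      show Trm.op (Sum.inl f) k = Trm.op (Sum.inl f) fun i => Trm.inl (sfn i)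
      refine congrArg _ (funext fun i => ?_)
      rw [ht i, hs i]
      rfl
/-- Let `E' ⊆ E_λ` contain, for each `f ∈ Σ_𝕊` of arity `n`, each `g ∈ Σ_𝕋` and
each `i ∈ {1,…,n}`, one equation `l = r` with
`l = f(x₁,…,x_{i−1}, g(ȳ), x_{i+1},…,x_n)` and `r` a representative of `λ_𝒱([l])`.
If the term rewriting system `(Σ_𝕊 ⊎ Σ_𝕋, E')` is terminating, then
`E_𝕊 ∪ E_𝕋 ∪ E'` generates the same congruence on terms as `E_𝕊 ∪ E_𝕋 ∪ E_λ`. -/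
theorem terminating_Eprime_axiomatises (SS TT : Thy) (d : DistLaw SS TT)
    (E' : Set (Eqn (SS.sig.sum TT.sig)))
    (rfun : ∀ (f : SS.sig.ops), TT.sig.ops → Fin (SS.sig.ar f) →
        Trm (SS.sig.sum TT.sig) ℕ)
    (hE' : E' = { e | ∃ f g i, e = (lhsOf SS TT f g i, rfun f g i) })
    (hsub : E' ⊆ Elam SS TT d)
    (hterm : RwTerminating E') :
    ∀ u v : Trm (SS.sig.sum TT.sig) ℕ,
      Deriv (embedS SS TT ∪ embedT SS TT ∪ E') u v ↔ Deriv (EUlam SS TT d) u v := by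
  intro u v
  have hsubset : embedS SS TT ∪ embedT SS TT ∪ E' ⊆ EUlam SS TT d := by
    intro e he
    rcases he with h | h
    · exact Or.inl h
    · exact Or.inr (hsub h)
  constructor
  · exact deriv_mono hsubset
  · have hE'sub : E' ⊆ embedS SS TT ∪ embedT SS TT ∪ E' := fun e he => Or.inr he
    have hcontS : ∀ e ∈ SS.eqns, ((Trm.inl e.1 : Trm (SS.sig.sum TT.sig) ℕ), Trm.inl e.2) ∈
        embedS SS TT ∪ embedT SS TT ∪ E' := fun e he => Or.inl (Or.inl ⟨e, he, rfl⟩)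
    have hcontT : ∀ e ∈ TT.eqns, ((Trm.inr e.1 : Trm (SS.sig.sum TT.sig) ℕ), Trm.inr e.2) ∈
        embedS SS TT ∪ embedT SS TT ∪ E' := fun e he => Or.inl (Or.inr ⟨e, he, rfl⟩)
    have hsep : ∀ w : Trm (SS.sig.sum TT.sig) ℕ,
        ∃ t₀, Deriv (embedS SS TT ∪ embedT SS TT ∪ E') w (sepTS t₀) := by
      intro w
      obtain ⟨v₀, hv₀, hnorm⟩ := exists_normal_form hE'sub hterm w
      obtain ⟨t₀, rfl⟩ := normal_sep SS TT E' rfun hE' v₀ hnorm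
      exact ⟨t₀, hv₀⟩
    have key : ∀ {X : Type} {a b : Trm (SS.sig.sum TT.sig) X},
        Deriv (EUlam SS TT d) a b → Deriv (embedS SS TT ∪ embedT SS TT ∪ E') a b := by
      intro X a b h
      induction h with
      | refl t => exact .refl t
      | symm _ ih => exact .symm ih
      | trans _ _ ih1 ih2 => exact .trans ih1 ih2
      | congr f _ ih => exact .congr f ih
      | subst g _ ih => exact .subst g ih
      | ax he g =>
        rcases he with (h | h) | hlam
        · exact .ax (Or.inl (Or.inl h)) g
        · exact .ax (Or.inl (Or.inr h)) g
        · obtain ⟨s, t, rfl, hval⟩ := hlam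
          refine Deriv.subst g ?_
          obtain ⟨t₀, h₀⟩ := hsep (sepST s)
          have hU1 : Deriv (EUlam SS TT d) (sepST s) (sepTS t) :=
            deriv_of_mem (e := (sepST s, sepTS t)) (Or.inr ⟨s, t, rfl, hval⟩)
          have hU : Deriv (EUlam SS TT d) (sepTS t₀) (sepTS t) :=
            .trans (.symm (deriv_mono hsubset h₀)) hU1
          have hsem := semM_sound d hU
          rw [semM_sepTS, semM_sepTS] at hsem
          have hder : Deriv TT.eqns
              (t₀.rename (FreeM.mk : Trm SS.sig ℕ → FreeM SS.sig SS.eqns ℕ))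
              (t.rename FreeM.mk) := freem_mk_eq_iff.mp hsem
          have h2 := deriv_transfer_inr hcontT hder (fun q => Trm.inl (Quot.out q))
          have h3 : ∀ w : Trm TT.sig (Trm SS.sig ℕ),
              (Trm.inr (w.rename (FreeM.mk : Trm SS.sig ℕ → FreeM SS.sig SS.eqns ℕ))
                : Trm (SS.sig.sum TT.sig) (FreeM SS.sig SS.eqns ℕ)).bind
                  (fun q => Trm.inl (Quot.out q)) =
              (Trm.inr w).bind
                (fun s' => Trm.inl (Quot.out (FreeM.mk s' : FreeM SS.sig SS.eqns ℕ))) := by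
            intro w
            rw [show w.rename (FreeM.mk : Trm SS.sig ℕ → FreeM SS.sig SS.eqns ℕ) =
                w.bind (fun x => Trm.var (FreeM.mk x)) from rfl, inr_bind, trm_bind_bind]
            rfl
          rw [h3, h3] at h2
          have hpt : ∀ s' : Trm SS.sig ℕ,
              Deriv (embedS SS TT ∪ embedT SS TT ∪ E')
                (Trm.inl (Quot.out (FreeM.mk s' : FreeM SS.sig SS.eqns ℕ))
                  : Trm (SS.sig.sum TT.sig) ℕ) (Trm.inl s') := by
            intro s'
            have h4 := deriv_transfer_inl hcontS (freem_out_mk (E := SS.eqns) s') Trm.var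
            rwa [trm_bind_var, trm_bind_var] at h4
          have step1 : Deriv (embedS SS TT ∪ embedT SS TT ∪ E') (sepTS t₀)
              ((Trm.inr t₀).bind
                (fun s' => Trm.inl (Quot.out (FreeM.mk s' : FreeM SS.sig SS.eqns ℕ)))) :=
            deriv_bind_right (Trm.inr t₀) (fun s' => (hpt s').symm)
          have step2 : Deriv (embedS SS TT ∪ embedT SS TT ∪ E')
              ((Trm.inr t).bind
                (fun s' => Trm.inl (Quot.out (FreeM.mk s' : FreeM SS.sig SS.eqns ℕ))))
              (sepTS t) :=
            deriv_bind_right (Trm.inr t) (fun s' => hpt s')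
          exact h₀.trans ((step1.trans h2).trans step2)
    exact key
end

section
/- Let 𝕊 and 𝕋 be algebraic theories and let R be a set of rewrite rules of the form s[t_x/x] → t[s_y/y] over Σ_𝕊 ⊎ Σ_𝕋, where each left-hand side s[t_x/x] has ST-layers (1,1) and each right-hand side t[s_y/y] has TS-layers (n,1) for some n (not fixed). Let Z be the set of those t_x that are variables (i.e. the variables occurring directly below the 𝕊-operation in the left-hand side), and suppose each s_y is linear in Z (each variable of Z occurs at most once in each s_y). Then the term rewriting system R is terminating. -/
/-! ## Depth, variables and occurrence counts of terms -/

/-- Depth of a term: variables have depth 0, and an operation adds 1 to the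
maximal depth of its arguments (so constants have depth 1). -/
def Trm.depth {σ : Sgn} {X : Type} : Trm σ X → ℕ
  | .var _ => 0
  | .op _ k => 1 + Finset.univ.sup fun i => (k i).depth

/-- The set of variables occurring in a term. -/
def Trm.varset {σ : Sgn} {X : Type} : Trm σ X → Set X
  | .var x => {x}
  | .op _ k => ⋃ i, (k i).varset

/-- The number of occurrences of the variable `v` in a term. -/
def Trm.count {σ : Sgn} {X : Type} [DecidableEq X] (v : X) : Trm σ X → ℕ
  | .var w => if w = v then 1 else 0
  | .op _ k => ∑ i, (k i).count v

open Ordinal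

namespace MyAux

/-- Universe-monomorphic ordinals (in Cantor normal form, with natural sum). -/
abbrev NO := Colex (Ordinal.{0} →₀ ℕ)

noncomputable instance : One NO := ⟨toColex (Finsupp.single 0 1)⟩

instance : ZeroLEOneClass NO := ⟨bot_le⟩

instance : NeZero (1 : NO) := ⟨fun h => by
  have := congrArg (fun a : NO => (ofColex a) 0) h
  change (Finsupp.single (0 : Ordinal.{0}) 1 : Ordinal.{0} →₀ ℕ) 0 = (0 : Ordinal.{0} →₀ ℕ) 0 at this
  simp at this⟩

/-- Evaluation of a Cantor normal form. -/
noncomputable def F (f : Ordinal.{0} →₀ ℕ) : Ordinal.{0} :=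
  Ordinal.CNF.eval ω (f.mapRange (fun n : ℕ => (n : Ordinal.{0})) Nat.cast_zero)

theorem F_zero : F 0 = 0 := by simp [F]

theorem F_single_add (k : Ordinal.{0}) (x : ℕ) (f : Ordinal.{0} →₀ ℕ)
    (h : ∀ e ∈ f.support, e < k) : F (Finsupp.single k x + f) = ω ^ k * x + F f := by
  unfold F
  rw [Finsupp.mapRange_add (fun a b => Nat.cast_add a b), Finsupp.mapRange_single,
    Ordinal.CNF.eval_single_add']
  intro e he
  exact h e (Finsupp.support_mapRange he)

theorem F_lt_opow (k : Ordinal.{0}) (f : Ordinal.{0} →₀ ℕ)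
    (h : ∀ e ∈ f.support, e < k) : F f < ω ^ k := by
  unfold F
  apply Ordinal.CNF.eval_lt
  · intro e'
    simpa using natCast_lt_omega0 (f e')
  · intro e he
    exact h e (Finsupp.support_mapRange he)

theorem F_strictMono : ∀ (g f : Ordinal.{0} →₀ ℕ), toColex f < toColex g → F f < F g := by
  intro g
  induction g using Finsupp.induction_on_max with
  | zero =>
    intro f h
    exact absurd h (not_lt_of_ge (bot_le : (⊥ : NO) ≤ toColex f))
  | single_add k x g hg hx IH =>
    intro f hfg
    have hrhs : ∀ m, k < m → (Finsupp.single k x + g) m = 0 := by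
      intro m hm
      rw [Finsupp.add_apply, Finsupp.single_eq_of_ne hm.ne', zero_add]
      by_contra hne
      exact absurd (hg m (Finsupp.mem_support_iff.mpr hne)) (not_lt_of_ge hm.le)
    have hxpos : (0 : Ordinal.{0}) < (x : Ordinal.{0}) := by
      exact_mod_cast Nat.pos_of_ne_zero hx
    have hlow : ω ^ k ≤ ω ^ k * x + F g :=
      (Ordinal.le_mul_left _ hxpos).trans le_self_add
    rw [F_single_add k x g hg]
    obtain ⟨i, hi, hlt⟩ := Finsupp.Colex.lt_iff.mp hfg
    have hik : i ≤ k := by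
      by_contra hki
      have := hrhs i (lt_of_not_ge hki)
      change f i < (Finsupp.single k x + g) i at hlt
      omega
    induction f using Finsupp.induction_on_max with
    | zero => rw [F_zero]; exact lt_of_lt_of_le (Ordinal.opow_pos _ omega0_pos) hlow
    | single_add j y f hf hy _ =>
      change ∀ m, i < m → (Finsupp.single j y + f) m = (Finsupp.single k x + g) m at hi
      change (Finsupp.single j y + f) i < (Finsupp.single k x + g) i at hlt
      have hlj : (Finsupp.single j y + f) j = y := by
        rw [Finsupp.add_apply, Finsupp.single_eq_same, Finsupp.notMem_support_iff.mp
          (fun h => lt_irrefl _ (hf j h)), add_zero]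
      rw [F_single_add j y f hf]
      rcases lt_trichotomy j k with hjk | rfl | hjk
      · calc ω ^ j * y + F f = F (Finsupp.single j y + f) := (F_single_add j y f hf).symm
          _ < ω ^ k := by
            apply F_lt_opow
            intro e he
            rcases Finset.mem_union.mp (Finsupp.support_add he) with he | he
            · rw [Finsupp.support_single_ne_zero _ hy, Finset.mem_singleton] at he
              rw [he]; exact hjk
            · exact (hf e he).trans hjk
          _ ≤ _ := hlow
      · have hgk : g j = 0 := Finsupp.notMem_support_iff.mp (fun h => lt_irrefl _ (hg j h))
        have hrk : (Finsupp.single j x + g) j = x := by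
          rw [Finsupp.add_apply, Finsupp.single_eq_same, hgk, add_zero]
        rcases lt_or_eq_of_le hik with hij | rfl
        · have hyx : y = x := by rw [← hlj, ← hrk]; exact hi j hij
          subst hyx
          have hfg' : toColex f < toColex g := by
            refine Finsupp.Colex.lt_iff.mpr ⟨i, fun m hm => ?_, ?_⟩
            · change f m = g m
              rcases eq_or_ne m j with rfl | hmj
              · rw [hgk]; exact Finsupp.notMem_support_iff.mp (fun h => lt_irrefl _ (hf m h))
              · have := hi m hm
                rwa [Finsupp.add_apply, Finsupp.add_apply, Finsupp.single_eq_of_ne hmj,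
                  zero_add, zero_add] at this
            · change f i < g i
              rwa [Finsupp.add_apply, Finsupp.add_apply, Finsupp.single_eq_of_ne hij.ne,
                zero_add, zero_add] at hlt
          have := IH f hfg'
          exact (add_lt_add_iff_left _).mpr this
        · rw [hlj, hrk] at hlt
          calc ω ^ i * y + F f < ω ^ i * y + ω ^ i :=
                (add_lt_add_iff_left _).mpr (F_lt_opow i f hf)
            _ = ω ^ i * ((y : Ordinal.{0}) + 1) := by rw [mul_add_one]
            _ ≤ ω ^ i * x := by
                apply mul_le_mul_right
                exact_mod_cast Nat.succ_le_of_lt hlt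
            _ ≤ _ := le_self_add
      · exfalso
        rcases lt_or_ge i j with hij | hji
        · have := hi j hij
          rw [hlj, hrhs j hjk] at this
          exact hy this
        · exact absurd (hik.trans_lt hjk) (not_lt_of_ge hji)

/-- The top of the support (plus one). -/
noncomputable def T (a : NO) : Ordinal.{0} := (ofColex a).support.sup Order.succ

theorem T_mono {a b : NO} (h : a < b) : T a ≤ T b := by
  obtain ⟨i, hi, hlt⟩ := Finsupp.Colex.lt_iff.mp h
  unfold T
  apply Finset.sup_le
  intro k hk
  rw [Finsupp.mem_support_iff] at hk
  rcases lt_or_ge i k with hik | hki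
  · apply Finset.le_sup (f := Order.succ)
    rw [Finsupp.mem_support_iff]
    have := hi k hik
    change (ofColex a) k = (ofColex b) k at this
    rw [← this]; exact hk
  · calc Order.succ k ≤ Order.succ i := Order.succ_le_succ hki
      _ ≤ _ := by
        apply Finset.le_sup (f := Order.succ)
        rw [Finsupp.mem_support_iff]
        change (ofColex a) i < (ofColex b) i at hlt
        omega

theorem lt_T {a : NO} {m : Ordinal.{0}} (hm : ofColex a m ≠ 0) : m < T a :=
  (Order.lt_succ m).trans_le (Finset.le_sup (f := Order.succ) (Finsupp.mem_support_iff.mpr hm))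

/-- The exponent of `w a`. -/
noncomputable def E (a : NO) : Ordinal.{0} := T a + F (ofColex a)

noncomputable def w (a : NO) : NO := toColex (Finsupp.single (E a) 1)

theorem lt_w_iff {a c : NO} : a < w c ↔ ∀ m, E c ≤ m → ofColex a m = 0 := by
  constructor
  · intro h m hm
    obtain ⟨i, hi, hlt⟩ := Finsupp.Colex.lt_iff.mp h
    change (ofColex a) i < (Finsupp.single (E c) 1 : Ordinal.{0} →₀ ℕ) i at hlt
    have hiE : i = E c := by
      by_contra hne
      rw [Finsupp.single_eq_of_ne hne] at hlt
      omega
    subst hiE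
    rcases lt_or_eq_of_le hm with hm | rfl
    · have := hi m hm
      change (ofColex a) m = (Finsupp.single (E c) 1 : Ordinal.{0} →₀ ℕ) m at this
      rwa [Finsupp.single_eq_of_ne hm.ne'] at this
    · rw [Finsupp.single_eq_same] at hlt
      omega
  · intro h
    refine Finsupp.Colex.lt_iff.mpr ⟨E c, fun m hm => ?_, ?_⟩
    · change (ofColex a) m = (Finsupp.single (E c) 1 : Ordinal.{0} →₀ ℕ) m
      rw [Finsupp.single_eq_of_ne hm.ne', h m hm.le]
    · change (ofColex a) (E c) < (Finsupp.single (E c) 1 : Ordinal.{0} →₀ ℕ) (E c)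
      rw [Finsupp.single_eq_same, h _ le_rfl]
      exact Nat.one_pos

theorem E_lt {a b : NO} (h : a < b) : E a < E b := by
  unfold E
  calc T a + F (ofColex a) ≤ T b + F (ofColex a) := add_le_add_left (T_mono h) _
    _ < T b + F (ofColex b) := (add_lt_add_iff_left _).mpr (F_strictMono _ _ h)

theorem w_lt_w {a b : NO} (h : a < b) : w a < w b :=
  Finsupp.Colex.single_lt_iff.mpr (E_lt h)

theorem w_le_w {a b : NO} (h : a ≤ b) : w a ≤ w b := by
  rcases lt_or_eq_of_le h with h | rfl
  · exact (w_lt_w h).le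
  · exact le_rfl

theorem w_pos (a : NO) : 0 < w a :=
  lt_w_iff.mpr fun m _ => rfl

theorem le_w_self (a : NO) : a ≤ w a := by
  apply le_of_lt
  apply lt_w_iff.mpr
  intro m hm
  by_contra hne
  have h1 := lt_T hne
  have h2 : T a ≤ E a := le_self_add
  exact absurd (h1.trans_le (h2.trans hm)) (lt_irrefl _)

theorem nzero_le (a : NO) : 0 ≤ a := bot_le

theorem add_lt_w {a b c : NO} (ha : a < w c) (hb : b < w c) : a + b < w c := by
  rw [lt_w_iff] at ha hb ⊢
  intro m hm
  change (ofColex a) m + (ofColex b) m = 0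
  rw [ha m hm, hb m hm]

theorem one_lt_w {c : NO} (h : 0 < c) : 1 < w c := by
  apply Finsupp.Colex.single_lt_iff.mpr
  have h1 : F 0 < F (ofColex c) := F_strictMono _ _ h
  rw [F_zero] at h1
  exact h1.trans_le le_add_self

theorem sum_lt_w {ι : Type*} (s : Finset ι) (f : ι → NO) {c : NO}
    (h : ∀ i ∈ s, f i < w c) : ∑ i ∈ s, f i < w c := by
  classical
  induction s using Finset.induction_on with
  | empty => simpa using w_pos c
  | insert _ _ hni ih =>
    rw [Finset.sum_insert hni]
    exact add_lt_w (h _ (Finset.mem_insert_self _ _))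
      (ih fun i hi => h i (Finset.mem_insert_of_mem hi))

end MyAux

namespace MyAux

/-- Ordinal interpretation of terms over a sum signature: `𝕊`-operations become
`ω ^ (Σᵢ ω ^ argᵢ)`, `𝕋`-operations become `(Σᵢ argᵢ) + 1` (natural sums). -/
noncomputable def ev {σ τ : Sgn} {X : Type} (ρ : X → NO) :
    Trm (Sgn.sum σ τ) X → NO
  | .var x => ρ x
  | .op (Sum.inl _) k => w (∑ i, w (ev ρ (k i)))
  | .op (Sum.inr _) k => (∑ i, ev ρ (k i)) + 1

theorem ev_bind {σ τ : Sgn} {X Y : Type} (ρ : Y → NO)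
    (g : X → Trm (Sgn.sum σ τ) Y) (t : Trm (Sgn.sum σ τ) X) :
    ev ρ (t.bind g) = ev (fun x => ev ρ (g x)) t := by
  induction t with
  | var x => rfl
  | op f k ih =>
    cases f with
    | inl f => simp only [Trm.bind, ev]; congr 2; funext i; rw [ih]
    | inr f => simp only [Trm.bind, ev]; congr 1; apply Finset.sum_congr rfl; intro i _; rw [ih]

theorem add_lt_add_right' {a b c : NO} (h : a < b) : a + c < b + c := by
  rw [add_comm a c, add_comm b c]; exact add_lt_add_right h c

theorem sum_update_lt {υ : Sgn} {n : ℕ} (F : Trm υ ℕ → NO) (k : Fin n → Trm υ ℕ) (i : Fin n)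
    {t t' : Trm υ ℕ} (h : F t' < F t) :
    (∑ j, F (Function.update k i t' j)) < ∑ j, F (Function.update k i t j) := by
  classical
  have e : ∀ u : Trm _ ℕ, (fun j => F (Function.update k i u j)) =
      Function.update (fun j => F (k j)) i (F u) := by
    intro u; funext j
    exact Function.apply_update (fun _ x => F x) k i u j
  rw [e t, e t', Finset.sum_update_of_mem (Finset.mem_univ i),
    Finset.sum_update_of_mem (Finset.mem_univ i)]
  exact add_lt_add_right' h

theorem rw_dec {σ τ : Sgn} (R : Set (Eqn (Sgn.sum σ τ)))
    (hkey : ∀ l r, (l, r) ∈ R → ∀ ρ : ℕ → NO, ev ρ r < ev ρ l) :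
    ∀ {t t' : Trm (Sgn.sum σ τ) ℕ}, Rw R t t' → ∀ ρ : ℕ → NO, ev ρ t' < ev ρ t := by
  intro t t' h
  induction h with
  | rule h g =>
    intro ρ
    rw [ev_bind, ev_bind]
    exact hkey _ _ h (fun x => ev ρ (g x))
  | ctx f k i h ih =>
    intro ρ
    cases f with
    | inl f =>
      simp only [ev]
      exact w_lt_w (sum_update_lt (fun u => w (ev ρ u)) k i (w_lt_w (ih ρ)))
    | inr f =>
      simp only [ev]
      exact add_lt_add_right' (sum_update_lt (fun u => ev ρ u) k i (ih ρ))

end MyAux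

namespace MyAux

theorem depth_zero_var {σ : Sgn} {X : Type} :
    ∀ (t : Trm σ X), t.depth = 0 → ∃ x, t = .var x
  | .var x, _ => ⟨x, rfl⟩
  | .op _ k, h => by simp only [Trm.depth] at h; omega

theorem children_var {σ : Sgn} {X : Type} {f : σ.ops} {k : Fin (σ.ar f) → Trm σ X}
    (h : (Trm.op f k).depth ≤ 1) (i : Fin (σ.ar f)) : ∃ x, k i = .var x := by
  apply depth_zero_var
  have h1 : (k i).depth ≤ Finset.univ.sup (fun i => (k i).depth) :=
    Finset.le_sup (f := fun i => (k i).depth) (Finset.mem_univ i)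
  simp only [Trm.depth] at h
  omega

theorem varset_bind {σ : Sgn} {X Y : Type} (t : Trm σ X) (g : X → Trm σ Y) :
    (t.bind g).varset = ⋃ x ∈ t.varset, (g x).varset := by
  induction t with
  | var x => simp [Trm.bind, Trm.varset]
  | op f k ih =>
    ext y
    simp only [Trm.bind, Trm.varset, Set.mem_iUnion, ih]
    constructor
    · rintro ⟨i, x, hx, hy⟩; exact ⟨x, ⟨i, hx⟩, hy⟩
    · rintro ⟨x, ⟨i, hx⟩, hy⟩; exact ⟨i, x, hx, hy⟩

theorem varset_inl {σ τ : Sgn} {X : Type} (t : Trm σ X) :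
    (Trm.inl t : Trm (Sgn.sum σ τ) X).varset = t.varset := by
  induction t with
  | var x => rfl
  | op f k ih => simp only [Trm.inl, Trm.varset, ih]; exact Set.iUnion_congr ih

theorem varset_inr {σ τ : Sgn} {X : Type} (t : Trm τ X) :
    (Trm.inr t : Trm (Sgn.sum σ τ) X).varset = t.varset := by
  induction t with
  | var x => rfl
  | op f k ih => simp only [Trm.inr, Trm.varset, ih]; exact Set.iUnion_congr ih

theorem varset_sepTS {σ τ : Sgn} {X : Type} (t : Trm τ (Trm σ X)) :
    (sepTS t).varset = ⋃ s ∈ t.varset, Trm.varset s := by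
  rw [sepTS, varset_bind, varset_inr]
  refine Set.iUnion_congr fun s => ?_
  refine Set.iUnion_congr fun _ => varset_inl s

theorem varset_sepST_lhs {σ τ : Sgn} (f : σ.ops) (tx : Fin (σ.ar f) → Trm τ ℕ) :
    (sepST (.op f fun j => .var (tx j))).varset = ⋃ j, (tx j).varset := by
  rw [sepST, varset_bind, varset_inl]
  ext y
  simp only [Trm.varset, Set.mem_iUnion]
  constructor
  · rintro ⟨x, ⟨j, hj⟩, hy⟩
    refine ⟨j, ?_⟩
    have : x = tx j := hj
    rw [varset_inr] at hy
    rwa [this] at hy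
  · rintro ⟨j, hy⟩
    exact ⟨tx j, ⟨j, rfl⟩, by rwa [varset_inr]⟩

theorem sepTS_var {σ τ : Sgn} {X : Type} (s : Trm σ X) :
    (sepTS (.var s) : Trm (Sgn.sum σ τ) X) = Trm.inl s := rfl

theorem sepTS_op {σ τ : Sgn} {X : Type} (g : τ.ops) (k : Fin (τ.ar g) → Trm τ (Trm σ X)) :
    (sepTS (.op g k) : Trm (Sgn.sum σ τ) X) = .op (Sum.inr g) (fun i => sepTS (k i)) := rfl

theorem ev_inr_var {σ τ : Sgn} (ρ : ℕ → NO) (x : ℕ) :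
    ev ρ (Trm.inr (.var x) : Trm (Sgn.sum σ τ) ℕ) = ρ x := rfl

theorem ev_inr_op {σ τ : Sgn} (ρ : ℕ → NO) (g : τ.ops) (k : Fin (τ.ar g) → Trm τ ℕ) :
    ev ρ (Trm.inr (.op g k) : Trm (Sgn.sum σ τ) ℕ) =
      (∑ i, ev ρ (Trm.inr (k i) : Trm (Sgn.sum σ τ) ℕ)) + 1 := rfl

theorem ev_inl_var {σ τ : Sgn} (ρ : ℕ → NO) (x : ℕ) :
    ev ρ (Trm.inl (.var x) : Trm (Sgn.sum σ τ) ℕ) = ρ x := rfl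

theorem ev_inl_op {σ τ : Sgn} (ρ : ℕ → NO) (f : σ.ops) (k : Fin (σ.ar f) → Trm σ ℕ) :
    ev ρ (Trm.inl (.op f k) : Trm (Sgn.sum σ τ) ℕ) =
      w (∑ i, w (ev ρ (Trm.inl (k i) : Trm (Sgn.sum σ τ) ℕ))) := rfl

theorem ev_lhs {σ τ : Sgn} (ρ : ℕ → NO) (f : σ.ops) (tx : Fin (σ.ar f) → Trm τ ℕ) :
    ev ρ (sepST (.op f fun j => .var (tx j)) : Trm (Sgn.sum σ τ) ℕ) =
      w (∑ j, w (ev ρ (Trm.inr (tx j) : Trm (Sgn.sum σ τ) ℕ))) := rfl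

theorem key {σ τ : Sgn} (f : σ.ops) (tx : Fin (σ.ar f) → Trm τ ℕ)
    (t' : Trm τ (Trm σ ℕ))
    (hdep : ∀ j, (tx j).depth ≤ 1) (J : Fin (σ.ar f)) (hJ : (tx J).depth = 1)
    (hdep' : ∀ s ∈ t'.varset, Trm.depth s ≤ 1)
    (hlin : ∀ s ∈ t'.varset, ∀ (v : ℕ) (j), tx j = .var v → Trm.count v s ≤ 1)
    (hvar : ∀ s ∈ t'.varset, Trm.varset s ⊆ ⋃ j, (tx j).varset)
    (ρ : ℕ → NO) :
    ev ρ (sepTS t') < ev ρ (sepST (.op f fun j => .var (tx j))) := by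
  classical
  set A : Fin (σ.ar f) → NO := fun j => ev ρ (Trm.inr (tx j)) with hA
  set M : NO := ∑ j, w (A j) with hM
  rw [ev_lhs]
  -- `tx J` is an operation
  have hJop : ∀ z, tx J ≠ .var z := by
    intro z hz
    rw [hz] at hJ
    simp [Trm.depth] at hJ
  have hwAM : ∀ j, w (A j) ≤ M :=
    fun j => Finset.single_le_sum (fun i _ => nzero_le (w (A i))) (Finset.mem_univ j)
  have hMpos : 0 < M := lt_of_lt_of_le (w_pos (A J)) (hwAM J)
  -- bound for variables under an operation position
  have hopbound : ∀ j, (∀ z, tx j ≠ .var z) → ∀ v ∈ (tx j).varset, ρ v < A j := by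
    intro j hop v hv
    rcases htx : tx j with z | ⟨g, ks⟩
    · exact absurd htx (hop z)
    · have hki := fun i => children_var (htx ▸ hdep j) i
      rw [htx] at hv
      simp only [Trm.varset, Set.mem_iUnion] at hv
      obtain ⟨i, hvi⟩ := hv
      obtain ⟨x, hx⟩ := hki i
      rw [hx] at hvi
      have hvx : v = x := hvi
      have h1 : ρ v = ev ρ (Trm.inr (ks i) : Trm (Sgn.sum σ τ) ℕ) := by
        rw [hx, hvx]; rfl
      have h2 : ev ρ (Trm.inr (ks i) : Trm (Sgn.sum σ τ) ℕ) ≤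
          ∑ i', ev ρ (Trm.inr (ks i') : Trm (Sgn.sum σ τ) ℕ) :=
        Finset.single_le_sum (f := fun i' => ev ρ (Trm.inr (ks i') : Trm (Sgn.sum σ τ) ℕ))
          (fun i' _ => nzero_le _) (Finset.mem_univ i)
      have h3 : A j = (∑ i', ev ρ (Trm.inr (ks i') : Trm (Sgn.sum σ τ) ℕ)) + 1 := by
        simp only [hA]
        rw [htx]
        rfl
      rw [h1, h3]
      exact lt_of_le_of_lt h2 (lt_add_of_pos_right _ one_pos)
  -- any variable of the left-hand side evaluates below `M`
  have hvarM : ∀ v ∈ ⋃ j, (tx j).varset, ρ v < M := by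
    intro v hv
    simp only [Set.mem_iUnion] at hv
    obtain ⟨j, hvj⟩ := hv
    rcases htx : tx j with z | ⟨g, ks⟩
    · rw [htx] at hvj
      have hvz : v = z := hvj
      have hjJ : j ≠ J := by
        intro h; exact hJop z (h ▸ htx)
      have hAj : A j = ρ v := by
        simp only [hA]
        rw [htx, hvz]
        rfl
      have hpair : w (A j) + w (A J) ≤ M := by
        have h0 : w (A j) + w (A J) = ∑ i ∈ ({j, J} : Finset (Fin (σ.ar f))), w (A i) :=
          (Finset.sum_pair (f := fun i => w (A i)) hjJ).symm
        rw [hM, h0]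
        exact Finset.sum_le_sum_of_subset_of_nonneg (Finset.subset_univ _)
          (fun i _ _ => nzero_le _)
      calc ρ v ≤ w (A j) := hAj ▸ le_w_self (A j)
        _ < w (A j) + w (A J) := lt_add_of_pos_right _ (w_pos _)
        _ ≤ M := hpair
    · have := hopbound j (by intro z hz; rw [htx] at hz; cases hz) v (by rwa [htx] at hvj ⊢)
      have h2 : A j ≤ w (A j) := le_w_self _
      exact lt_of_lt_of_le (lt_of_lt_of_le this h2) (hwAM j)
  -- the main subclaim : every inner `σ`-part evaluates below `w M`
  have subclaim : ∀ s ∈ t'.varset, ev ρ (Trm.inl s : Trm (Sgn.sum σ τ) ℕ) < w M := by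
    intro s hs
    rcases hcs : s with v | ⟨h, ks⟩
    · rw [ev_inl_var]
      have hv : v ∈ ⋃ j, (tx j).varset := hvar s hs (by rw [hcs]; exact rfl)
      exact lt_of_lt_of_le (hvarM v hv) (le_w_self M)
    · have hkvar := fun i => children_var (hcs ▸ hdep' s hs) i
      choose vv hvv using hkvar
      have hev : ∀ i, ev ρ (Trm.inl (ks i) : Trm (Sgn.sum σ τ) ℕ) = ρ (vv i) := by
        intro i; rw [hvv i]; rfl
      rw [ev_inl_op]
      apply w_lt_w
      simp only [hev]
      -- choose a covering position for each variable
      have hvj : ∀ i, ∃ j, vv i ∈ (tx j).varset := by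
        intro i
        have hmem : vv i ∈ Trm.varset s := by
          rw [hcs]
          simp only [Trm.varset, Set.mem_iUnion]
          exact ⟨i, by rw [hvv i]; exact rfl⟩
        have := hvar s hs hmem
        simpa only [Set.mem_iUnion] using this
      choose φ hφ using hvj
      rw [← Finset.sum_fiberwise_of_maps_to (g := φ) (fun i _ => Finset.mem_univ (φ i))
        (fun i => w (ρ (vv i)))]
      apply Finset.sum_lt_sum
      · intro j _
        rcases htx : tx j with z | ⟨g, ks'⟩
        · -- variable position : the fiber has at most one element
          have hfib : Finset.univ.filter (fun i => φ i = j) ⊆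
              Finset.univ.filter (fun i => vv i = z) := by
            intro i hi
            simp only [Finset.mem_filter, Finset.mem_univ, true_and] at hi ⊢
            have := hφ i
            rw [hi, htx] at this
            exact this
          have hcount : Trm.count z s = (Finset.univ.filter (fun i => vv i = z)).card := by
            rw [hcs]
            simp only [Trm.count]
            rw [Finset.card_filter]
            apply Finset.sum_congr rfl
            intro i _
            rw [hvv i]
            simp [Trm.count]
          have hcard : (Finset.univ.filter (fun i => φ i = j)).card ≤ 1 := by
            have h1 := Finset.card_le_card hfib
            have h2 := hlin s hs z j htx
            omega
          have hAz : w (A j) = w (ρ z) := by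
            simp only [hA]
            rw [htx]
            rfl
          rcases Finset.eq_empty_or_nonempty
              (Finset.univ.filter (fun i => φ i = j)) with he | ⟨x0, hx0⟩
          · rw [he, Finset.sum_empty]
            exact nzero_le _
          · have hsing : Finset.univ.filter (fun i => φ i = j) = {x0} := by
              apply Finset.eq_singleton_iff_unique_mem.mpr
              exact ⟨hx0, fun y hy => Finset.card_le_one.mp hcard y hy x0 hx0⟩
            rw [hsing, Finset.sum_singleton]
            have hvx0 : vv x0 = z := by
              have := hφ x0
              simp only [Finset.mem_filter, Finset.mem_univ, true_and] at hx0
              rw [hx0, htx] at this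
              exact this
            rw [hvx0, hAz]
        · -- operation position : strict bound via principality
          apply le_of_lt
          apply sum_lt_w
          intro i hi
          simp only [Finset.mem_filter, Finset.mem_univ, true_and] at hi
          have hmem : vv i ∈ (tx j).varset := by rw [← hi]; exact hφ i
          have := hopbound j (by intro z hz; rw [htx] at hz; cases hz) (vv i) hmem
          exact w_lt_w this
      · refine ⟨J, Finset.mem_univ J, ?_⟩
        apply sum_lt_w
        intro i hi
        simp only [Finset.mem_filter, Finset.mem_univ, true_and] at hi
        have hmem : vv i ∈ (tx J).varset := by rw [← hi]; exact hφ i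
        exact w_lt_w (hopbound J hJop (vv i) hmem)
  -- conclude by induction on the outer `τ`-part
  have main : ∀ u : Trm τ (Trm σ ℕ), u.varset ⊆ t'.varset →
      ev ρ (sepTS u : Trm (Sgn.sum σ τ) ℕ) < w M := by
    intro u
    induction u with
    | var s =>
      intro hsub
      rw [sepTS_var]
      exact subclaim s (hsub rfl)
    | op g k ih =>
      intro hsub
      rw [sepTS_op]
      show (∑ i, ev ρ (sepTS (k i) : Trm (Sgn.sum σ τ) ℕ)) + 1 < w M
      refine add_lt_w (sum_lt_w _ _ fun i _ => ih i ?_) (one_lt_w hMpos)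
      intro x hx
      apply hsub
      simp only [Trm.varset, Set.mem_iUnion]
      exact ⟨i, hx⟩
  exact main t' subset_rfl

end MyAux

/-! ## Statement 16: termination of rules with layers `(1,1) → (n,1)` -/

/-- Let `R` be a set of rewrite rules `s[t_x/x] → t[s_y/y]` over `Σ_𝕊 ⊎ Σ_𝕋`
where every left-hand side has `ST`-layers `(1,1)` (one `𝕊`-operation applied
to arguments of `𝕋`-depth at most one, at least one of depth exactly one),
every right-hand side has `TS`-layers `(n,1)` for some `n` (inner `𝕊`-parts of
depth at most one), each inner `𝕊`-part `s_y` is linear in the variables `Z`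
occurring directly below the `𝕊`-operation of the left-hand side, and
`var(rhs) ⊆ var(lhs)`.  Then `R` is terminating. -/
theorem layers_one_one_to_n_one_terminating (SS TT : Thy)
    (R : Set (Eqn (SS.sig.sum TT.sig)))
    (hshape : ∀ e ∈ R, ∃ (f : SS.sig.ops) (tx : Fin (SS.sig.ar f) → Trm TT.sig ℕ)
        (t' : Trm TT.sig (Trm SS.sig ℕ)),
        -- the left-hand side is s[t_x/x] with s a single 𝕊-operation
        e.1 = sepST (.op f fun j => .var (tx j)) ∧
        -- the right-hand side is the separated term t'
        e.2 = sepTS t' ∧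
        -- ST-layers (1,1) of the left-hand side
        (∀ j, (tx j).depth ≤ 1) ∧ (∃ j, (tx j).depth = 1) ∧
        -- TS-layers (n,1) of the right-hand side: inner 𝕊-parts of depth ≤ 1
        (∀ s ∈ t'.varset, Trm.depth s ≤ 1) ∧
        -- each s_y is linear in Z (the variables directly below the 𝕊-symbol)
        (∀ s ∈ t'.varset, ∀ (v : ℕ) (j : Fin (SS.sig.ar f)),
            tx j = .var v → Trm.count v s ≤ 1) ∧
        -- variable condition of term rewriting systems
        e.2.varset ⊆ e.1.varset) :
    RwTerminating R := by
  classical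
  rintro ⟨seq, hseq⟩
  have hkey : ∀ l r, (l, r) ∈ R → ∀ ρ : ℕ → MyAux.NO, MyAux.ev ρ r < MyAux.ev ρ l := by
    intro l r hlr ρ
    obtain ⟨f, tx, t', h1, h2, h3, ⟨J, hJ⟩, h5, h6, h7⟩ := hshape (l, r) hlr
    simp only at h1 h2 h7
    rw [h1, h2]
    apply MyAux.key f tx t' h3 J hJ h5 h6 ?_ ρ
    intro s hs x hx
    have hx1 : x ∈ (sepTS t' : Trm (SS.sig.sum TT.sig) ℕ).varset := by
      rw [MyAux.varset_sepTS]
      exact Set.mem_biUnion hs hx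
    have hx2 : x ∈ (sepST (.op f fun j => .var (tx j)) : Trm (SS.sig.sum TT.sig) ℕ).varset := by
      rw [← h1]
      exact h7 (h2 ▸ hx1)
    rwa [MyAux.varset_sepST_lhs] at hx2
  have hdec : ∀ n, MyAux.ev (fun _ => 0) (seq (n + 1)) < MyAux.ev (fun _ => 0) (seq n) :=
    fun n => MyAux.rw_dec R hkey (hseq n) _
  exact (RelEmbedding.wellFounded_iff_isEmpty.mp
    (wellFounded_lt : WellFounded ((· < ·) : MyAux.NO → MyAux.NO → Prop))).false
    (RelEmbedding.natGT (fun n => MyAux.ev (fun _ => 0) (seq n)) hdec)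
end

section
/- Let 𝕊 and 𝕋 be algebraic theories and let R be a set of rewrite rules of the form s[t_x/x] → t[s_y/y] over Σ_𝕊 ⊎ Σ_𝕋, where each left-hand side has ST-layers (1,1), each right-hand side has TS-layers (1,n) for some n (not fixed), and each right-hand side is linear (every variable occurs at most once in it). Then the term rewriting system R is terminating. -/
/-! ## Auxiliary material for the termination proof -/

section Aux

open Multiset Relation

variable {σ τ ρ : Sgn}

/-- Number of `τ`-operation symbols occurring in a term over the sum signature. -/
def nT {X : Type} : Trm (σ.sum τ) X → ℕ
  | .var _ => 0
  | .op (Sum.inl _) k => ∑ i, nT (k i)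
  | .op (Sum.inr _) k => 1 + ∑ i, nT (k i)

/-- The measure multiset: one entry per `σ`-operation occurrence, recording the
number of `τ`-operations strictly below it. -/
def muM {X : Type} : Trm (σ.sum τ) X → Multiset ℕ
  | .var _ => 0
  | .op (Sum.inl _) k => (∑ i, nT (k i)) ::ₘ ∑ i, muM (k i)
  | .op (Sum.inr _) k => ∑ i, muM (k i)

/-- Sum of `F x` over all variable occurrences of a term. -/
def osum {X M : Type} [AddCommMonoid M] (F : X → M) : Trm ρ X → M
  | .var x => F x
  | .op _ k => ∑ i, osum F (k i)

/-- Number of operation symbols of a term. -/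
def tsize {X : Type} : Trm ρ X → ℕ
  | .var _ => 0
  | .op _ k => 1 + ∑ i, tsize (k i)

/-- Finite set of variables of a term (over variables `ℕ`). -/
def fv : Trm ρ ℕ → Finset ℕ
  | .var x => {x}
  | .op _ k => Finset.univ.biUnion fun i => fv (k i)

lemma count_eq_zero_of_not_mem_fv {t : Trm ρ ℕ} {x : ℕ} (h : x ∉ fv t) :
    t.count x = 0 := by
  induction t with
  | var w =>
    simp only [fv, Finset.mem_singleton] at h
    simp [Trm.count, Ne.symm h]
  | op f k ih =>
    simp only [fv, Finset.mem_biUnion, Finset.mem_univ, true_and, not_exists] at h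
    simp only [Trm.count]
    exact Finset.sum_eq_zero fun i _ => ih i (h i)

lemma osum_eq_sum_count {M : Type} [AddCommMonoid M] (F : ℕ → M) (t : Trm ρ ℕ)
    {s : Finset ℕ} (hs : fv t ⊆ s) :
    osum F t = ∑ x ∈ s, t.count x • F x := by
  induction t with
  | var w =>
    have hw : w ∈ s := hs (by simp [fv])
    rw [osum, Finset.sum_eq_single_of_mem w hw]
    · simp [Trm.count]
    · intro b _ hb
      simp [Trm.count, Ne.symm hb]
  | op f k ih =>
    have hsub : ∀ i, fv (k i) ⊆ s := fun i =>
      le_trans (by intro x hx; exact Finset.mem_biUnion.2 ⟨i, Finset.mem_univ i, hx⟩) hs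
    simp only [osum, Trm.count]
    rw [Finset.sum_congr rfl fun i _ => ih i (hsub i), Finset.sum_comm]
    exact Finset.sum_congr rfl fun x _ => by rw [← Finset.sum_smul]

lemma count_inl {X : Type} [DecidableEq X] (t : Trm σ X) (x : X) :
    Trm.count x (Trm.inl t : Trm (σ.sum τ) X) = Trm.count x t := by
  induction t with
  | var w => rfl
  | op f k ih => simp [Trm.inl, Trm.count, ih, Sgn.sum]; exact Finset.sum_congr rfl fun i _ => ih i

lemma count_inr {X : Type} [DecidableEq X] (t : Trm τ X) (x : X) :
    Trm.count x (Trm.inr t : Trm (σ.sum τ) X) = Trm.count x t := by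
  induction t with
  | var w => rfl
  | op f k ih => simp [Trm.inr, Trm.count, ih, Sgn.sum]; exact Finset.sum_congr rfl fun i _ => ih i

lemma fv_inl (t : Trm σ ℕ) : fv (Trm.inl t : Trm (σ.sum τ) ℕ) = fv t := by
  induction t with
  | var w => rfl
  | op f k ih => simp [Trm.inl, fv, ih, Sgn.sum]; exact Finset.biUnion_congr rfl fun i _ => ih i

lemma fv_inr (t : Trm τ ℕ) : fv (Trm.inr t : Trm (σ.sum τ) ℕ) = fv t := by
  induction t with
  | var w => rfl
  | op f k ih => simp [Trm.inr, fv, ih, Sgn.sum]; exact Finset.biUnion_congr rfl fun i _ => ih i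

lemma count_pos_iff_mem_varset {X : Type} [DecidableEq X] {t : Trm ρ X} {x : X} :
    0 < t.count x ↔ x ∈ t.varset := by
  induction t with
  | var w =>
    simp [Trm.count, Trm.varset, Set.mem_singleton_iff, eq_comm]
    split <;> simp_all
  | op f k ih =>
    simp only [Trm.count, Trm.varset, Set.mem_iUnion]
    rw [pos_iff_ne_zero, Ne, Finset.sum_eq_zero_iff]
    push_neg
    constructor
    · rintro ⟨i, _, hi⟩
      exact ⟨i, (ih i).1 (pos_iff_ne_zero.2 hi)⟩
    · rintro ⟨i, hi⟩
      exact ⟨i, Finset.mem_univ i, pos_iff_ne_zero.1 ((ih i).2 hi)⟩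

lemma nT_bind_inr {X Y : Type} (t : Trm τ X) (g : X → Trm (σ.sum τ) Y) :
    nT ((Trm.inr t).bind g) = tsize t + osum (fun x => nT (g x)) t := by
  induction t with
  | var w => simp [Trm.inr, Trm.bind, tsize, osum]
  | op f k ih =>
    simp only [Trm.inr, Trm.bind, nT, tsize, osum, ih, Finset.sum_add_distrib, Sgn.sum,
      Sum.elim_inr]
    rw [add_assoc, ← Finset.sum_add_distrib]; congr 1; exact Finset.sum_congr rfl fun i _ => ih i

lemma muM_bind_inr {X Y : Type} (t : Trm τ X) (g : X → Trm (σ.sum τ) Y) :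
    muM ((Trm.inr t).bind g) = osum (fun x => muM (g x)) t := by
  induction t with
  | var w => simp [Trm.inr, Trm.bind, osum]
  | op f k ih => simp only [Trm.inr, Trm.bind, muM, osum, ih, Sgn.sum, Sum.elim_inr]; exact Finset.sum_congr rfl fun i _ => ih i

lemma nT_bind_inl {X Y : Type} (s : Trm σ X) (g : X → Trm (σ.sum τ) Y) :
    nT ((Trm.inl s).bind g) = osum (fun x => nT (g x)) s := by
  induction s with
  | var w => simp [Trm.inl, Trm.bind, osum]
  | op f k ih => simp only [Trm.inl, Trm.bind, nT, osum, ih, Sgn.sum, Sum.elim_inl]; exact Finset.sum_congr rfl fun i _ => ih i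

/-- The multiset of entries contributed by the `σ`-operations of a pure
`σ`-term after substitution by `g`. -/
def entrS {X Y : Type} (g : X → Trm (σ.sum τ) Y) : Trm σ X → Multiset ℕ
  | .var _ => 0
  | .op _ k => (∑ i, osum (fun x => nT (g x)) (k i)) ::ₘ ∑ i, entrS g (k i)

lemma muM_bind_inl {X Y : Type} (s : Trm σ X) (g : X → Trm (σ.sum τ) Y) :
    muM ((Trm.inl s).bind g) = entrS g s + osum (fun x => muM (g x)) s := by
  induction s with
  | var w => simp [Trm.inl, Trm.bind, osum, entrS]
  | op f k ih =>
    simp only [Trm.inl, Trm.bind, muM, osum, entrS, ih, Finset.sum_add_distrib, Sgn.sum,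
      Sum.elim_inl]
    rw [Multiset.cons_add]
    congr 1
    exact Finset.sum_congr rfl fun i _ => nT_bind_inl (k i) g
    exact (Finset.sum_congr rfl fun i _ => ih i).trans Finset.sum_add_distrib

lemma entrS_le {X Y : Type} (g : X → Trm (σ.sum τ) Y) (s : Trm σ X) :
    ∀ e ∈ entrS g s, e ≤ osum (fun x => nT (g x)) s := by
  induction s with
  | var w => simp [entrS]
  | op f k ih =>
    intro e he
    rw [entrS, Multiset.mem_cons] at he
    rcases he with rfl | he
    · exact le_of_eq rfl
    · rcases Multiset.mem_sum.1 he with ⟨i, _, hi⟩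
      calc e ≤ osum (fun x => nT (g x)) (k i) := ih i e hi
        _ ≤ ∑ j, osum (fun x => nT (g x)) (k j) :=
          Finset.single_le_sum (f := fun j => osum (fun x => nT (g x)) (k j))
            (fun j _ => Nat.zero_le _) (Finset.mem_univ i)

/-! ### The Dershowitz–Manna style multiset order via `CutExpand` -/

/-- Strict multiset order on `Multiset ℕ`: transitive closure of `CutExpand (· < ·)`. -/
def DMlt : Multiset ℕ → Multiset ℕ → Prop :=
  Relation.TransGen (Relation.CutExpand (α := ℕ) (· < ·))

lemma DMlt_wf : WellFounded DMlt :=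
  (WellFounded.cutExpand (wellFounded_lt)).transGen

lemma dm_add_left (A : Multiset ℕ) {B B' : Multiset ℕ} (h : DMlt B' B) :
    DMlt (A + B') (A + B) := by
  induction h with
  | single h => exact Relation.TransGen.single ((Relation.cutExpand_add_left A).2 h)
  | tail _ h2 ih => exact ih.tail ((Relation.cutExpand_add_left A).2 h2)

lemma remove_steps (W B : Multiset ℕ) :
    Relation.ReflTransGen (Relation.CutExpand (α := ℕ) (· < ·)) B (W + B) := by
  induction W using Multiset.induction with
  | empty => simpa using Relation.ReflTransGen.refl
  | cons a W ih =>
    refine ih.tail ⟨0, a, by simp, ?_⟩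
    rw [add_zero, add_comm, Multiset.singleton_add, Multiset.cons_add]

lemma dm_main {X Y W : Multiset ℕ} {N : ℕ} (hY : ∀ y ∈ Y, y < N) :
    DMlt (X + Y) (X + (N ::ₘ W)) := by
  have step1 : Relation.CutExpand (α := ℕ) (· < ·) (X + W + Y) (X + (N ::ₘ W)) := by
    refine ⟨Y, N, hY, ?_⟩
    rw [← Multiset.singleton_add N W]
    abel
  have step2 : Relation.ReflTransGen (Relation.CutExpand (α := ℕ) (· < ·))
      (X + Y) (X + W + Y) := by
    have := remove_steps W (X + Y)
    rwa [show W + (X + Y) = X + W + Y by abel] at this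
  exact Relation.TransGen.trans_right step2 (Relation.TransGen.single step1)

lemma dm_cons_le {N' N : ℕ} (h : N' ≤ N) {B B' : Multiset ℕ} (hB : DMlt B' B) :
    DMlt (N' ::ₘ B') (N ::ₘ B) := by
  rcases lt_or_eq_of_le h with hlt | rfl
  · have h1 : DMlt (N ::ₘ B') (N ::ₘ B) := by
      simpa [Multiset.singleton_add] using dm_add_left {N} hB
    have h2 : Relation.CutExpand (α := ℕ) (· < ·) (N' ::ₘ B') (N ::ₘ B') := by
      have := (Relation.cutExpand_add_right (r := ((· < ·) : ℕ → ℕ → Prop)) B').2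
        (Relation.cutExpand_singleton_singleton hlt)
      simpa [Multiset.singleton_add] using this
    exact Relation.TransGen.head h2 h1
  · simpa [Multiset.singleton_add] using dm_add_left {N'} hB

lemma no_inf_chain {α : Type*} {r : α → α → Prop} (wf : WellFounded r)
    (f : ℕ → α) (h : ∀ n, r (f (n + 1)) (f n)) : False := by
  have key : ∀ a, ∀ n : ℕ, f n = a → False := by
    intro a
    induction a using WellFounded.induction wf with
    | _ a ih =>
      intro n hn
      exact ih (f (n + 1)) (hn ▸ h n) (n + 1) rfl
  exact key (f 0) 0 rfl

/-- Every rewrite step weakly decreases `nT` and strictly decreases `muM`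
in the multiset order. -/
lemma rw_measure {σ τ : Sgn} {R : Set (Eqn (σ.sum τ))}
    (hshape : ∀ e ∈ R, ∃ (f : σ.ops) (tx : Fin (σ.ar f) → Trm τ ℕ)
        (g : τ.ops) (sy : Fin (τ.ar g) → Trm σ ℕ),
        e.1 = sepST (.op f fun j => .var (tx j)) ∧
        (∀ j, (tx j).depth ≤ 1) ∧ (∃ j, (tx j).depth = 1) ∧
        e.2 = sepTS (.op g fun l => .var (sy l)) ∧
        (∀ v : ℕ, Trm.count v e.2 ≤ 1) ∧
        e.2.varset ⊆ e.1.varset)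
    {a b : Trm (σ.sum τ) ℕ} (h : Rw R a b) :
    nT b ≤ nT a ∧ DMlt (muM b) (muM a) := by
  induction h with
  | @rule l r hmem gs =>
    obtain ⟨f, tx, gop, sy, hl, -, ⟨j₀, hj₀⟩, hr, hlin, hvar⟩ := hshape (l, r) hmem
    have hl' : l = Trm.op (Sum.inl f) (fun j => (Trm.inr (tx j) : Trm (σ.sum τ) ℕ)) := hl
    have hr' : r = Trm.op (Sum.inr gop) (fun y => (Trm.inl (sy y) : Trm (σ.sum τ) ℕ)) := hr
    rw [hl'] at hvar; rw [hr'] at hvar hlin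
    subst hl' hr'
    -- notation
    set Fn : ℕ → ℕ := fun x => nT (gs x) with hFn
    set Fm : ℕ → Multiset ℕ := fun x => muM (gs x) with hFm
    set sfin : Finset ℕ :=
      (Finset.univ.biUnion fun j => fv (tx j)) ∪ (Finset.univ.biUnion fun y => fv (sy y))
      with hsfin
    have htx_sub : ∀ j, fv (tx j) ⊆ sfin := fun j x hx =>
      Finset.mem_union_left _ (Finset.mem_biUnion.2 ⟨j, Finset.mem_univ j, hx⟩)
    have hsy_sub : ∀ y, fv (sy y) ⊆ sfin := fun y x hx =>
      Finset.mem_union_right _ (Finset.mem_biUnion.2 ⟨y, Finset.mem_univ y, hx⟩)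
    set cL : ℕ → ℕ := fun x => ∑ j, Trm.count x (tx j) with hcL
    set cR : ℕ → ℕ := fun x => ∑ y, Trm.count x (sy y) with hcR
    set T0 : ℕ := ∑ j, tsize (tx j) with hT0def
    -- conversions of occurrence sums to counting sums
    have hosum_txn : (∑ j, osum Fn (tx j)) = ∑ x ∈ sfin, cL x • Fn x := by
      rw [Finset.sum_congr rfl fun j _ => osum_eq_sum_count Fn (tx j) (htx_sub j),
        Finset.sum_comm]
      exact Finset.sum_congr rfl fun x _ => by rw [← Finset.sum_smul]
    have hosum_txm : (∑ j, osum Fm (tx j)) = ∑ x ∈ sfin, cL x • Fm x := by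
      rw [Finset.sum_congr rfl fun j _ => osum_eq_sum_count Fm (tx j) (htx_sub j),
        Finset.sum_comm]
      exact Finset.sum_congr rfl fun x _ => by rw [← Finset.sum_smul]
    have hosum_syn : (∑ y, osum Fn (sy y)) = ∑ x ∈ sfin, cR x • Fn x := by
      rw [Finset.sum_congr rfl fun y _ => osum_eq_sum_count Fn (sy y) (hsy_sub y),
        Finset.sum_comm]
      exact Finset.sum_congr rfl fun x _ => by rw [← Finset.sum_smul]
    have hosum_sym : (∑ y, osum Fm (sy y)) = ∑ x ∈ sfin, cR x • Fm x := by
      rw [Finset.sum_congr rfl fun y _ => osum_eq_sum_count Fm (sy y) (hsy_sub y),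
        Finset.sum_comm]
      exact Finset.sum_congr rfl fun x _ => by rw [← Finset.sum_smul]
    -- counts of the left- and right-hand sides
    have hcount_l : ∀ x, Trm.count x (Trm.op (Sum.inl f) fun j => (Trm.inr (tx j) : Trm (σ.sum τ) ℕ)) = cL x := by
      intro x
      simp only [Trm.count, Sgn.sum, Sum.elim_inl, hcL]
      exact Finset.sum_congr rfl fun j _ => count_inr (tx j) x
    have hcount_r : ∀ x, Trm.count x (Trm.op (Sum.inr gop) fun y => (Trm.inl (sy y) : Trm (σ.sum τ) ℕ)) = cR x := by
      intro x
      simp only [Trm.count, Sgn.sum, Sum.elim_inr, hcR]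
      exact Finset.sum_congr rfl fun y _ => count_inl (sy y) x
    have hcLR : ∀ x, cR x ≤ cL x := by
      intro x
      have hcr1 : cR x ≤ 1 := by rw [← hcount_r x]; exact hlin x
      rcases Nat.eq_zero_or_pos (cR x) with h0 | hpos
      · omega
      · have hx : x ∈ (Trm.op (Sum.inr gop) fun y => (Trm.inl (sy y) : Trm (σ.sum τ) ℕ) :
            Trm (σ.sum τ) ℕ).varset :=
          count_pos_iff_mem_varset.1 (by rw [hcount_r]; exact hpos)
        have hx' := count_pos_iff_mem_varset.2 (hvar hx)
        rw [hcount_l] at hx'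
        omega
    have hT0 : 1 ≤ T0 := by
      have h1 : 1 ≤ tsize (tx j₀) := by
        rcases htx : tx j₀ with w | ⟨h, kk⟩
        · rw [htx] at hj₀; simp [Trm.depth] at hj₀
        · rw [tsize]; omega
      calc 1 ≤ tsize (tx j₀) := h1
        _ ≤ T0 := Finset.single_le_sum (f := fun j => tsize (tx j))
            (fun j _ => Nat.zero_le _) (Finset.mem_univ j₀)
    -- the head entry
    set N : ℕ := T0 + ∑ x ∈ sfin, cL x • Fn x with hN
    -- values of the measures on the substituted sides
    have hNl : (∑ j, nT ((Trm.inr (tx j)).bind gs)) = N := by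
      rw [Finset.sum_congr rfl fun j _ => nT_bind_inr (tx j) gs, Finset.sum_add_distrib,
        hosum_txn]
    have hnTl : nT ((Trm.op (Sum.inl f) fun j => (Trm.inr (tx j) : Trm (σ.sum τ) ℕ)).bind gs) = N := by
      simp only [Trm.bind, nT, Sgn.sum, Sum.elim_inl]
      exact hNl
    have hMl : muM ((Trm.op (Sum.inl f) fun j => (Trm.inr (tx j) : Trm (σ.sum τ) ℕ)).bind gs) =
        N ::ₘ ∑ x ∈ sfin, cL x • Fm x := by
      simp only [Trm.bind, muM, Sgn.sum, Sum.elim_inl]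
      erw [hNl, Finset.sum_congr rfl fun j _ => muM_bind_inr (tx j) gs, hosum_txm]
    have hnTr : nT ((Trm.op (Sum.inr gop) fun y => (Trm.inl (sy y) : Trm (σ.sum τ) ℕ)).bind gs) =
        1 + ∑ x ∈ sfin, cR x • Fn x := by
      simp only [Trm.bind, nT, Sgn.sum, Sum.elim_inr]
      erw [Finset.sum_congr rfl fun y _ => nT_bind_inl (sy y) gs, hosum_syn]
    have hMr : muM ((Trm.op (Sum.inr gop) fun y => (Trm.inl (sy y) : Trm (σ.sum τ) ℕ)).bind gs) =
        (∑ y, entrS gs (sy y)) + ∑ x ∈ sfin, cR x • Fm x := by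
      simp only [Trm.bind, muM, Sgn.sum, Sum.elim_inr]
      erw [Finset.sum_congr rfl fun y _ => muM_bind_inl (sy y) gs, Finset.sum_add_distrib,
        hosum_sym]
      rfl
    have hFnle : ∑ x ∈ sfin, cR x • Fn x ≤ ∑ x ∈ sfin, cL x • Fn x :=
      Finset.sum_le_sum fun x _ => by
        simpa [smul_eq_mul] using Nat.mul_le_mul_right (Fn x) (hcLR x)
    constructor
    · rw [hnTl, hnTr, hN]
      omega
    · rw [hMl, hMr]
      set Xm := ∑ x ∈ sfin, cR x • Fm x with hXm
      set Wm := ∑ x ∈ sfin, (cL x - cR x) • Fm x with hWm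
      have hsplit : ∑ x ∈ sfin, cL x • Fm x = Xm + Wm := by
        rw [hXm, hWm, ← Finset.sum_add_distrib]
        refine Finset.sum_congr rfl fun x _ => ?_
        rw [← add_nsmul]
        congr 1
        have := hcLR x
        omega
      have hY : ∀ y ∈ ∑ y, entrS gs (sy y), y < N := by
        intro y hy
        rcases Multiset.mem_sum.1 hy with ⟨y', -, hy'⟩
        have h1 : y ≤ osum Fn (sy y') := entrS_le gs (sy y') y hy'
        have h2 : osum Fn (sy y') = ∑ x ∈ sfin, Trm.count x (sy y') • Fn x :=
          osum_eq_sum_count Fn (sy y') (hsy_sub y')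
        have h3 : ∑ x ∈ sfin, Trm.count x (sy y') • Fn x ≤ ∑ x ∈ sfin, cR x • Fn x :=
          Finset.sum_le_sum fun x _ => by
            have hcount : Trm.count x (sy y') ≤ cR x :=
              Finset.single_le_sum (f := fun y => Trm.count x (sy y))
                (fun y _ => Nat.zero_le _) (Finset.mem_univ y')
            simpa [smul_eq_mul] using Nat.mul_le_mul_right (Fn x) hcount
        rw [hN]
        omega
      have heq : N ::ₘ (Xm + Wm) = Xm + (N ::ₘ Wm) := by
        rw [← Multiset.singleton_add, ← Multiset.singleton_add]
        abel
      rw [hsplit, heq, add_comm _ Xm]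
      exact dm_main hY
  | @ctx f k i t t' hstep ih =>
    have key : ∀ {M : Type} [AddCommMonoid M] (F : Trm (σ.sum τ) ℕ → M) (u),
        (∑ j, F (Function.update k i u j)) =
          F u + ∑ j ∈ Finset.univ \ {i}, F (k j) := by
      intro M _ F u
      rw [Finset.sum_congr rfl fun j _ =>
        Function.apply_update (fun _ t => F t) k i u j]
      exact Finset.sum_update_of_mem (Finset.mem_univ i) (fun j => F (k j)) (F u)
    obtain ⟨ih1, ih2⟩ := ih
    cases f with
    | inl f0 =>
      constructor
      · simp only [nT, key]
        omega
      · simp only [muM, key]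
        refine dm_cons_le (Nat.add_le_add_right ih1 _) ?_
        have := dm_add_left (∑ j ∈ Finset.univ \ {i}, muM (k j)) ih2
        rwa [add_comm _ (muM t'), add_comm _ (muM t)] at this
    | inr g0 =>
      constructor
      · simp only [nT, key]
        omega
      · simp only [muM, key]
        have := dm_add_left (∑ j ∈ Finset.univ \ {i}, muM (k j)) ih2
        rwa [add_comm _ (muM t'), add_comm _ (muM t)] at this

end Aux

/-! ## Statement 17: termination of rules with layers `(1,1) → (1,n)` -/

/-- Let `R` be a set of rewrite rules `s[t_x/x] → t[s_y/y]` over `Σ_𝕊 ⊎ Σ_𝕋`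
where every left-hand side has `ST`-layers `(1,1)`, every right-hand side has
`TS`-layers `(1,n)` for some `n` (a single `𝕋`-operation applied to `𝕊`-terms),
every right-hand side is linear (each variable occurs at most once in it), and
`var(rhs) ⊆ var(lhs)`.  Then `R` is terminating. -/
theorem layers_one_one_to_one_n_terminating (SS TT : Thy)
    (R : Set (Eqn (SS.sig.sum TT.sig)))
    (hshape : ∀ e ∈ R, ∃ (f : SS.sig.ops) (tx : Fin (SS.sig.ar f) → Trm TT.sig ℕ)
        (g : TT.sig.ops) (sy : Fin (TT.sig.ar g) → Trm SS.sig ℕ),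
        -- the left-hand side is s[t_x/x] with s a single 𝕊-operation
        e.1 = sepST (.op f fun j => .var (tx j)) ∧
        -- ST-layers (1,1) of the left-hand side
        (∀ j, (tx j).depth ≤ 1) ∧ (∃ j, (tx j).depth = 1) ∧
        -- the right-hand side is t[s_y/y] with t a single 𝕋-operation
        e.2 = sepTS (.op g fun l => .var (sy l)) ∧
        -- the right-hand side is linear
        (∀ v : ℕ, Trm.count v e.2 ≤ 1) ∧
        -- variable condition of term rewriting systems
        e.2.varset ⊆ e.1.varset) :
    RwTerminating R := by
  rintro ⟨seq, hseq⟩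
  exact no_inf_chain DMlt_wf (fun n => muM (seq n)) fun n =>
    (rw_measure hshape (hseq n)).2
end
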